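/- arXiv:1304.5749 — 8 statements merged into one kernel-verified Lean document; each statement's English description precedes it below -/
import Mathlib

section
/- For every real numbers α, β > -1 there exist positive constants c₁, c₂ (depending only on α and β) such that for all integers N ≥ 3, c₁·N^(α+β+1) ≤ ∑_{n=1}^{N-1} n^α (N-n)^β ≤ c₂·N^(α+β+1). -/
/-!
For the upper bound, one of `n` and `N - n` is at least `N / 2`, so each term is at most a
constant times `N ^ β * n ^ α + N ^ α * (N - n) ^ β`; comparing with `∫ x ^ α` gives
`∑_{n < N} n ^ α ≲ N ^ (α + 1)` for `α > -1`, and reflecting `n ↦ N - n` handles the second part.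
For the lower bound, the roughly `N / 3` terms with `n` in the middle third of `[1, N)` are each
`≳ N ^ α * N ^ β`.
-/

open Real Finset

section RpowComparison

variable {c x y : ℝ}

lemma rpow_le_max_one_mul_rpow (γ : ℝ) (hc : 0 < c) (hy : 0 < y) (hyx : y / c ≤ x)
    (hxy : x ≤ y) : x ^ γ ≤ max 1 (c ^ (-γ)) * y ^ γ := by
  have hx : 0 < x := (div_pos hy hc).trans_le hyx
  rcases le_or_gt 0 γ with hγ | hγ
  · calc x ^ γ ≤ 1 * y ^ γ := by rw [one_mul]; exact rpow_le_rpow hx.le hxy hγ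
      _ ≤ _ := by gcongr; exact le_max_left _ _
  · calc x ^ γ ≤ (y / c) ^ γ := rpow_le_rpow_of_nonpos (div_pos hy hc) hyx hγ.le
      _ = c ^ (-γ) * y ^ γ := by rw [div_rpow hy.le hc.le, rpow_neg hc.le]; ring
      _ ≤ _ := by gcongr; exact le_max_right _ _

lemma min_one_mul_rpow_le_rpow (γ : ℝ) (hc : 0 < c) (hy : 0 < y) (hyx : y / c ≤ x)
    (hxy : x ≤ y) : min 1 (c ^ (-γ)) * y ^ γ ≤ x ^ γ := by
  have hx : 0 < x := (div_pos hy hc).trans_le hyx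
  rcases le_or_gt 0 γ with hγ | hγ
  · calc min 1 (c ^ (-γ)) * y ^ γ ≤ c ^ (-γ) * y ^ γ := by gcongr; exact min_le_right _ _
      _ = (y / c) ^ γ := by rw [div_rpow hy.le hc.le, rpow_neg hc.le]; ring
      _ ≤ x ^ γ := rpow_le_rpow (div_pos hy hc).le hyx hγ
  · calc min 1 (c ^ (-γ)) * y ^ γ ≤ 1 * y ^ γ := by gcongr; exact min_le_left _ _
      _ ≤ x ^ γ := by rw [one_mul]; exact rpow_le_rpow_of_nonpos hx hxy hγ.le

end RpowComparison

lemma sum_Ico_rpow_le {α : ℝ} (hα : -1 < α) (M : ℕ) :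
    ∑ n ∈ Ico 1 M, (n : ℝ) ^ α ≤ max 1 (2 ^ (-α)) / (α + 1) * (M : ℝ) ^ (α + 1) := by
  set K := max 1 ((2 : ℝ) ^ (-α))
  have hα1 : 0 < α + 1 := by linarith
  rcases Nat.eq_zero_or_pos M with rfl | hM
  · simp [zero_rpow hα1.ne']
  have hint : ∀ a b : ℝ, IntervalIntegrable (fun x => K * x ^ α) MeasureTheory.volume a b :=
    fun a b => (intervalIntegral.intervalIntegrable_rpow' hα).const_mul K
  -- on `[n, n + 1]` with `1 ≤ n` we have `x / 2 ≤ n ≤ x`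
  have hterm : ∀ n ∈ Ico 1 M, (n : ℝ) ^ α ≤ ∫ x in (n : ℝ)..((n + 1 : ℕ) : ℝ), K * x ^ α := by
    intro n hn
    have hn1 : (1 : ℝ) ≤ n := by exact_mod_cast (mem_Ico.mp hn).1
    calc (n : ℝ) ^ α = ∫ _ in (n : ℝ)..((n + 1 : ℕ) : ℝ), (n : ℝ) ^ α := by simp
      _ ≤ _ := by
        refine intervalIntegral.integral_mono_on (by push_cast; linarith)
          intervalIntegrable_const (hint _ _) fun x hx => ?_
        push_cast at hx
        exact rpow_le_max_one_mul_rpow α two_pos (by linarith [hx.1]) (by linarith [hx.2]) hx.1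
  calc ∑ n ∈ Ico 1 M, (n : ℝ) ^ α
      ≤ ∑ n ∈ Ico 1 M, ∫ x in (n : ℝ)..((n + 1 : ℕ) : ℝ), K * x ^ α := sum_le_sum hterm
    _ = ∫ x in (1 : ℝ)..M, K * x ^ α := by
      simpa using intervalIntegral.sum_integral_adjacent_intervals_Ico (a := fun n : ℕ => (n : ℝ))
        hM fun k _ => hint _ _
    _ = K / (α + 1) * ((M : ℝ) ^ (α + 1) - 1) := by
      rw [intervalIntegral.integral_const_mul, integral_rpow (Or.inl hα), one_rpow]; ring
    _ ≤ K / (α + 1) * (M : ℝ) ^ (α + 1) := by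
      gcongr
      linarith

lemma rpow_mul_sub_rpow_le (α β : ℝ) {x y : ℝ} (hy : 0 < y) (hx : 0 ≤ x) (hxy : x ≤ y) :
    x ^ α * (y - x) ^ β ≤
      max 1 (2 ^ (-β)) * y ^ β * x ^ α + max 1 (2 ^ (-α)) * y ^ α * (y - x) ^ β := by
  have hxα : 0 ≤ x ^ α := rpow_nonneg hx α
  have hyxβ : 0 ≤ (y - x) ^ β := rpow_nonneg (by linarith) β
  rcases le_total (2 * x) y with h | h
  · have := rpow_le_max_one_mul_rpow (x := y - x) β two_pos hy (by linarith) (by linarith)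
    have : 0 ≤ max 1 (2 ^ (-α)) * y ^ α * (y - x) ^ β := by positivity
    nlinarith
  · have := rpow_le_max_one_mul_rpow α two_pos hy (by linarith) hxy
    have : 0 ≤ max 1 (2 ^ (-β)) * y ^ β * x ^ α := by positivity
    nlinarith

lemma sum_Ico_rpow_mul_sub_rpow_le {α β : ℝ} (hα : -1 < α) (hβ : -1 < β) {N : ℕ} (hN : 0 < N) :
    ∑ n ∈ Ico 1 N, (n : ℝ) ^ α * ((N : ℝ) - n) ^ β ≤
      (max 1 (2 ^ (-β)) * (max 1 (2 ^ (-α)) / (α + 1)) +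
        max 1 (2 ^ (-α)) * (max 1 (2 ^ (-β)) / (β + 1))) * (N : ℝ) ^ (α + β + 1) := by
  have hN0 : (0 : ℝ) < N := by exact_mod_cast hN
  have hreflect : ∑ n ∈ Ico 1 N, ((N : ℝ) - n) ^ β = ∑ n ∈ Ico 1 N, (n : ℝ) ^ β := by
    have h := sum_Ico_reflect (fun j : ℕ => (j : ℝ) ^ β) 1 (Nat.le_succ N)
    rw [Nat.add_sub_cancel_left, Nat.add_sub_cancel] at h
    rw [← h]
    refine sum_congr rfl fun n hn => ?_
    rw [Nat.cast_sub (mem_Ico.mp hn).2.le]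
  calc ∑ n ∈ Ico 1 N, (n : ℝ) ^ α * ((N : ℝ) - n) ^ β
      ≤ ∑ n ∈ Ico 1 N, (max 1 (2 ^ (-β)) * (N : ℝ) ^ β * (n : ℝ) ^ α +
          max 1 (2 ^ (-α)) * (N : ℝ) ^ α * ((N : ℝ) - n) ^ β) := by
        refine sum_le_sum fun n hn => rpow_mul_sub_rpow_le α β hN0 n.cast_nonneg ?_
        exact_mod_cast (mem_Ico.mp hn).2.le
    _ = max 1 (2 ^ (-β)) * (N : ℝ) ^ β * ∑ n ∈ Ico 1 N, (n : ℝ) ^ α +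
          max 1 (2 ^ (-α)) * (N : ℝ) ^ α * ∑ n ∈ Ico 1 N, (n : ℝ) ^ β := by
        rw [sum_add_distrib, ← mul_sum, ← mul_sum, hreflect]
    _ ≤ max 1 (2 ^ (-β)) * (N : ℝ) ^ β * (max 1 (2 ^ (-α)) / (α + 1) * (N : ℝ) ^ (α + 1)) +
          max 1 (2 ^ (-α)) * (N : ℝ) ^ α * (max 1 (2 ^ (-β)) / (β + 1) * (N : ℝ) ^ (β + 1)) := by
        gcongr
        · exact sum_Ico_rpow_le hα N
        · exact sum_Ico_rpow_le hβ N
    _ = _ := by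
        rw [rpow_add hN0, rpow_add hN0, rpow_add hN0, rpow_add hN0, rpow_one]; ring

lemma le_sum_Ico_rpow_mul_sub_rpow (α β : ℝ) {N : ℕ} (hN : 3 ≤ N) :
    min 1 (9 ^ (-α)) * min 1 (9 ^ (-β)) / 9 * (N : ℝ) ^ (α + β + 1) ≤
      ∑ n ∈ Ico 1 N, (n : ℝ) ^ α * ((N : ℝ) - n) ^ β := by
  have hN0 : (0 : ℝ) < N := by exact_mod_cast (by omega : 0 < N)
  set m := min 1 ((9 : ℝ) ^ (-α)) * (N : ℝ) ^ α * (min 1 ((9 : ℝ) ^ (-β)) * (N : ℝ) ^ β)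
  -- the middle third `[N / 3, 2 (N / 3))` has about `N / 3` terms, each with `n, N - n ≥ N / 9`
  set K := N / 3
  have hterm : ∀ n ∈ Ico K (2 * K), m ≤ (n : ℝ) ^ α * ((N : ℝ) - n) ^ β := by
    intro n hn
    have hn : N ≤ 9 * n ∧ 9 * n ≤ 8 * N ∧ n ≤ N := by rw [mem_Ico] at hn; omega
    obtain ⟨h₁, h₂, h₃⟩ : (N : ℝ) ≤ 9 * n ∧ 9 * (n : ℝ) ≤ 8 * N ∧ (n : ℝ) ≤ N := by
      exact_mod_cast hn
    exact mul_le_mul (min_one_mul_rpow_le_rpow α (by norm_num) hN0 (by linarith) h₃)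
      (min_one_mul_rpow_le_rpow β (by norm_num) hN0 (by linarith) (by linarith))
      (by positivity) (rpow_nonneg n.cast_nonneg α)
  have hK : (N : ℝ) / 9 ≤ K := by
    rw [div_le_iff₀ (by norm_num)]; exact_mod_cast (by omega : N ≤ K * 9)
  calc min 1 (9 ^ (-α)) * min 1 (9 ^ (-β)) / 9 * (N : ℝ) ^ (α + β + 1) = (N : ℝ) / 9 * m := by
        rw [rpow_add hN0, rpow_add hN0, rpow_one]; ring
    _ ≤ K * m := by gcongr
    _ ≤ ∑ n ∈ Ico K (2 * K), (n : ℝ) ^ α * ((N : ℝ) - n) ^ β := by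
        simpa [two_mul] using card_nsmul_le_sum _ _ _ hterm
    _ ≤ ∑ n ∈ Ico 1 N, (n : ℝ) ^ α * ((N : ℝ) - n) ^ β := by
        refine sum_le_sum_of_subset_of_nonneg (fun n hn => ?_) fun n hn _ => ?_
        · simp only [mem_Ico] at hn ⊢; omega
        · have : (n : ℝ) ≤ N := by exact_mod_cast (mem_Ico.mp hn).2.le
          exact mul_nonneg (rpow_nonneg n.cast_nonneg α) (rpow_nonneg (by linarith) β)

theorem stmt0 (α β : ℝ) (hα : -1 < α) (hβ : -1 < β) :
    ∃ c₁ c₂ : ℝ, 0 < c₁ ∧ 0 < c₂ ∧ ∀ N : ℕ, 3 ≤ N →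
      c₁ * (N : ℝ) ^ (α + β + 1) ≤
        ∑ n ∈ Finset.Ico 1 N, (n : ℝ) ^ α * ((N : ℝ) - n) ^ β ∧
      ∑ n ∈ Finset.Ico 1 N, (n : ℝ) ^ α * ((N : ℝ) - n) ^ β ≤
        c₂ * (N : ℝ) ^ (α + β + 1) := by
  have hα1 : 0 < α + 1 := by linarith
  have hβ1 : 0 < β + 1 := by linarith
  exact ⟨_, _, by positivity, by positivity, fun N hN =>
    ⟨le_sum_Ico_rpow_mul_sub_rpow α β hN, sum_Ico_rpow_mul_sub_rpow_le hα hβ (by omega)⟩⟩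
end

section
/- For any positive integers a₁, a₂, a₃ there exists a constant C (depending only on a₁, a₂, a₃) such that for every integer m, ∑ over triples of positive integers (y₁, y₂, y₃) with a₁y₁ + a₂y₂ - a₃y₃ = m of y₁^(-5/7)·y₂^(-5/7)·y₃^(-5/7) ≤ C. -/
lemma key_aux {x y z : ℝ} (hx : 1 ≤ x) (hy : 1 ≤ y) (hzx : x ≤ z) (hzy : y ≤ z) :
    x ^ (-5/7 : ℝ) * y ^ (-5/7 : ℝ) * z ^ (-5/7 : ℝ) ≤
      x ^ (-15/14 : ℝ) * y ^ (-15/14 : ℝ) := by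
  have hx0 : (0:ℝ) < x := lt_of_lt_of_le one_pos hx
  have hy0 : (0:ℝ) < y := lt_of_lt_of_le one_pos hy
  have hz0 : (0:ℝ) < z := lt_of_lt_of_le hx0 hzx
  have hxy : x * y ≤ z ^ 2 := by nlinarith
  have h1 : z ^ (-5/7 : ℝ) ≤ (x * y) ^ (-5/14 : ℝ) := by
    have h2 : (z ^ 2) ^ (-5/14 : ℝ) ≤ (x * y) ^ (-5/14 : ℝ) :=
      Real.rpow_le_rpow_of_nonpos (by positivity) hxy (by norm_num)
    calc z ^ (-5/7 : ℝ) = (z ^ (2:ℝ)) ^ (-5/14 : ℝ) := by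
          rw [← Real.rpow_mul hz0.le]; norm_num
      _ = (z ^ 2) ^ (-5/14 : ℝ) := by rw [Real.rpow_two]
      _ ≤ (x * y) ^ (-5/14 : ℝ) := h2
  calc x ^ (-5/7 : ℝ) * y ^ (-5/7 : ℝ) * z ^ (-5/7 : ℝ)
      ≤ x ^ (-5/7 : ℝ) * y ^ (-5/7 : ℝ) * (x ^ (-5/14 : ℝ) * y ^ (-5/14 : ℝ)) := by
        rw [Real.mul_rpow hx0.le hy0.le] at h1
        exact mul_le_mul_of_nonneg_left h1 (by positivity)
    _ = (x ^ (-5/7 : ℝ) * x ^ (-5/14 : ℝ)) * (y ^ (-5/7 : ℝ) * y ^ (-5/14 : ℝ)) := by ring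
    _ = x ^ (-15/14 : ℝ) * y ^ (-15/14 : ℝ) := by
        rw [← Real.rpow_add hx0, ← Real.rpow_add hy0]; norm_num

lemma key {x y z : ℝ} (hx : 1 ≤ x) (hy : 1 ≤ y) (hz : 1 ≤ z) :
    x ^ (-5/7 : ℝ) * y ^ (-5/7 : ℝ) * z ^ (-5/7 : ℝ) ≤
      x ^ (-15/14 : ℝ) * y ^ (-15/14 : ℝ) + x ^ (-15/14 : ℝ) * z ^ (-15/14 : ℝ) +
        y ^ (-15/14 : ℝ) * z ^ (-15/14 : ℝ) := by
  have hx0 : (0:ℝ) < x := lt_of_lt_of_le one_pos hx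
  have hy0 : (0:ℝ) < y := lt_of_lt_of_le one_pos hy
  have hz0 : (0:ℝ) < z := lt_of_lt_of_le one_pos hz
  have t12 : (0:ℝ) ≤ x ^ (-15/14 : ℝ) * y ^ (-15/14 : ℝ) := by positivity
  have t13 : (0:ℝ) ≤ x ^ (-15/14 : ℝ) * z ^ (-15/14 : ℝ) := by positivity
  have t23 : (0:ℝ) ≤ y ^ (-15/14 : ℝ) * z ^ (-15/14 : ℝ) := by positivity
  rcases le_total x y with h | h
  · rcases le_total y z with h' | h'
    · have := key_aux hx hy (le_trans h h') h'
      linarith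
    · have := key_aux hx hz h h'
      have e : x ^ (-5/7 : ℝ) * y ^ (-5/7 : ℝ) * z ^ (-5/7 : ℝ)
          = x ^ (-5/7 : ℝ) * z ^ (-5/7 : ℝ) * y ^ (-5/7 : ℝ) := by ring
      rw [e]; linarith
  · rcases le_total x z with h'' | h''
    · have := key_aux hx hy h'' (le_trans h h'')
      linarith
    · have := key_aux hy hz h h''
      have e : x ^ (-5/7 : ℝ) * y ^ (-5/7 : ℝ) * z ^ (-5/7 : ℝ)
          = y ^ (-5/7 : ℝ) * z ^ (-5/7 : ℝ) * x ^ (-5/7 : ℝ) := by ring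
      rw [e]; linarith

set_option maxHeartbeats 1000000 in
theorem stmt7 (a₁ a₂ a₃ : ℕ) (h₁ : 0 < a₁) (h₂ : 0 < a₂) (h₃ : 0 < a₃) :
    ∃ C : ℝ, ∀ m : ℤ,
      (∑' p : {p : ℕ × ℕ × ℕ // 0 < p.1 ∧ 0 < p.2.1 ∧ 0 < p.2.2 ∧
          (a₁ : ℤ) * p.1 + (a₂ : ℤ) * p.2.1 - (a₃ : ℤ) * p.2.2 = m},
        ((p : ℕ × ℕ × ℕ).1 : ℝ) ^ (-5/7 : ℝ) *
        ((p : ℕ × ℕ × ℕ).2.1 : ℝ) ^ (-5/7 : ℝ) *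
        ((p : ℕ × ℕ × ℕ).2.2 : ℝ) ^ (-5/7 : ℝ)) ≤ C := by
  have hgf : Summable (fun n : ℕ => (n:ℝ) ^ (-15/14 : ℝ)) :=
    Real.summable_nat_rpow.mpr (by norm_num)
  set GG : ℕ × ℕ → ℝ := fun q => (q.1:ℝ) ^ (-15/14 : ℝ) * (q.2:ℝ) ^ (-15/14 : ℝ) with hGGdef
  have hGG : Summable GG :=
    hgf.mul_of_nonneg hgf (fun n => by positivity) (fun n => by positivity)
  refine ⟨3 * ∑' q, GG q, fun m => ?_⟩
  set S := {p : ℕ × ℕ × ℕ // 0 < p.1 ∧ 0 < p.2.1 ∧ 0 < p.2.2 ∧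
      (a₁ : ℤ) * p.1 + (a₂ : ℤ) * p.2.1 - (a₃ : ℤ) * p.2.2 = m} with hSdef
  set e12 : S → ℕ × ℕ := fun p => (p.1.1, p.1.2.1) with he12
  set e13 : S → ℕ × ℕ := fun p => (p.1.1, p.1.2.2) with he13
  set e23 : S → ℕ × ℕ := fun p => (p.1.2.1, p.1.2.2) with he23
  have inj12 : Function.Injective e12 := by
    rintro ⟨⟨x1, x2, x3⟩, hx⟩ ⟨⟨y1, y2, y3⟩, hy⟩ h
    simp only [he12, Prod.mk.injEq] at h
    obtain ⟨h1, h2⟩ := h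
    subst h1; subst h2
    have e1 := hx.2.2.2
    have e2 := hy.2.2.2
    dsimp only at e1 e2
    have : (a₃ : ℤ) * x3 = (a₃ : ℤ) * y3 := by omega
    have h3 : (x3 : ℤ) = y3 :=
      mul_left_cancel₀ (by exact_mod_cast h₃.ne') this
    have : x3 = y3 := by exact_mod_cast h3
    subst this; rfl
  have inj13 : Function.Injective e13 := by
    rintro ⟨⟨x1, x2, x3⟩, hx⟩ ⟨⟨y1, y2, y3⟩, hy⟩ h
    simp only [he13, Prod.mk.injEq] at h
    obtain ⟨h1, h2⟩ := h
    subst h1; subst h2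
    have e1 := hx.2.2.2
    have e2 := hy.2.2.2
    dsimp only at e1 e2
    have : (a₂ : ℤ) * x2 = (a₂ : ℤ) * y2 := by omega
    have h3 : (x2 : ℤ) = y2 :=
      mul_left_cancel₀ (by exact_mod_cast h₂.ne') this
    have : x2 = y2 := by exact_mod_cast h3
    subst this; rfl
  have inj23 : Function.Injective e23 := by
    rintro ⟨⟨x1, x2, x3⟩, hx⟩ ⟨⟨y1, y2, y3⟩, hy⟩ h
    simp only [he23, Prod.mk.injEq] at h
    obtain ⟨h1, h2⟩ := h
    subst h1; subst h2
    have e1 := hx.2.2.2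
    have e2 := hy.2.2.2
    dsimp only at e1 e2
    have : (a₁ : ℤ) * x1 = (a₁ : ℤ) * y1 := by omega
    have h3 : (x1 : ℤ) = y1 :=
      mul_left_cancel₀ (by exact_mod_cast h₁.ne') this
    have : x1 = y1 := by exact_mod_cast h3
    subst this; rfl
  have H12 : Summable (fun p : S => GG (e12 p)) := hGG.comp_injective inj12
  have H13 : Summable (fun p : S => GG (e13 p)) := hGG.comp_injective inj13
  have H23 : Summable (fun p : S => GG (e23 p)) := hGG.comp_injective inj23
  set F : S → ℝ := fun p =>
    ((p : ℕ × ℕ × ℕ).1 : ℝ) ^ (-5/7 : ℝ) *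
    ((p : ℕ × ℕ × ℕ).2.1 : ℝ) ^ (-5/7 : ℝ) *
    ((p : ℕ × ℕ × ℕ).2.2 : ℝ) ^ (-5/7 : ℝ) with hFdef
  have hle : ∀ p : S, F p ≤ GG (e12 p) + GG (e13 p) + GG (e23 p) := by
    intro p
    have hx : (1:ℝ) ≤ ((p : ℕ × ℕ × ℕ).1 : ℝ) := by exact_mod_cast p.2.1
    have hy : (1:ℝ) ≤ ((p : ℕ × ℕ × ℕ).2.1 : ℝ) := by exact_mod_cast p.2.2.1
    have hz : (1:ℝ) ≤ ((p : ℕ × ℕ × ℕ).2.2 : ℝ) := by exact_mod_cast p.2.2.2.1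
    exact key hx hy hz
  have hFsum : Summable F :=
    Summable.of_nonneg_of_le (fun p => by positivity) hle ((H12.add H13).add H23)
  have hGGnn : ∀ q : ℕ × ℕ, 0 ≤ GG q := fun q => by positivity
  have b12 : (∑' p : S, GG (e12 p)) ≤ ∑' q, GG q :=
    Summable.tsum_le_tsum_of_inj e12 inj12 (fun c _ => hGGnn c) (fun b => le_rfl) H12 hGG
  have b13 : (∑' p : S, GG (e13 p)) ≤ ∑' q, GG q :=
    Summable.tsum_le_tsum_of_inj e13 inj13 (fun c _ => hGGnn c) (fun b => le_rfl) H13 hGG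
  have b23 : (∑' p : S, GG (e23 p)) ≤ ∑' q, GG q :=
    Summable.tsum_le_tsum_of_inj e23 inj23 (fun c _ => hGGnn c) (fun b => le_rfl) H23 hGG
  calc (∑' p : S, F p)
      ≤ ∑' p : S, (GG (e12 p) + GG (e13 p) + GG (e23 p)) :=
        Summable.tsum_le_tsum hle hFsum ((H12.add H13).add H23)
    _ = (∑' p : S, GG (e12 p)) + (∑' p : S, GG (e13 p)) + (∑' p : S, GG (e23 p)) := by
        rw [Summable.tsum_add (H12.add H13) H23, Summable.tsum_add H12 H13]
    _ ≤ 3 * ∑' q, GG q := by linarith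
end

section
/- There exists a constant C > 0 such that for every integer n ≥ 2, ∑ over 7-tuples of positive integers (x₁,...,x₇) with x₁+x₂+x₃+x₄ = n, x₄+x₅ = x₆+x₇, and x₅ < x₄, of ∏_{i=1}^{7} x_i^(-5/7) ≤ C. -/
/-!
Put `w a = a ^ (-5/7)`; Lean's convention `0 ^ (-s) = 0` lets all sums run over nonnegative
tuples. With `k = x₁ + x₂` and `l = x₃ + x₄ = n - k` the sum is at most `∑_{k+l=n} A k * B l`,
where `A = w ⋆ w` (`pairSum`) is an additive convolution and
`B l = ∑_{x₃+x₄=l} w x₃ * w x₄ * ∑_{x₅<x₄} w x₅ * A (x₄ + x₅)` (`innerSum`).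
The basic estimate `∑_{a+b=m} a^(-s) b^(-t) ≲ m^(1-s-t)` for `0 < s, t < 1` gives
`A m ≲ m^(-3/7)`. Since `A (x₄ + x₅) ≲ x₄^(-3/7)` and `∑_{x₅<x₄} w x₅ ≲ x₄^(2/7)`, the factor
attached to `x₄` is `≲ x₄^(-6/7)`, so `B l ≲ l^(-4/7)`. The exponents of the last convolution
add up to `3/7 + 4/7 = 1`, so the total is `≲ n^0`.
-/

open Finset Real

section PowerSums

variable {s t : ℝ}

lemma one_sub_mul_rpow_neg_le_rpow_sub_rpow (hs0 : 0 ≤ s) (hs1 : s ≤ 1) {x : ℝ}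
    (hx : 1 ≤ x) :
    (1 - s) * x ^ (-s) ≤ x ^ (1 - s) - (x - 1) ^ (1 - s) := by
  have hx0 : 0 < x := by linarith
  have hinv : x⁻¹ ≤ 1 := inv_le_one_of_one_le₀ hx
  have bernoulli : (1 + -x⁻¹) ^ (1 - s) ≤ 1 + (1 - s) * -x⁻¹ :=
    rpow_one_add_le_one_add_mul_self (by linarith) (by linarith) (by linarith)
  have hsplit : (x - 1) ^ (1 - s) = x ^ (1 - s) * (1 + -x⁻¹) ^ (1 - s) := by
    rw [← mul_rpow hx0.le (by linarith)]
    congr 1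
    field_simp
    ring
  have hpow : x ^ (1 - s) * x⁻¹ = x ^ (-s) := by
    rw [← rpow_neg_one, ← rpow_add hx0]
    ring_nf
  rw [hsplit, ← hpow]
  nlinarith [mul_le_mul_of_nonneg_left bernoulli (rpow_nonneg hx0.le (1 - s))]

lemma sum_range_rpow_neg_le (hs0 : 0 < s) (hs1 : s < 1) (m : ℕ) :
    ∑ a ∈ range (m + 1), (a : ℝ) ^ (-s) ≤ (m : ℝ) ^ (1 - s) / (1 - s) := by
  have hs : 0 < 1 - s := by linarith
  induction m with
  | zero => simp [zero_rpow (neg_ne_zero.2 hs0.ne'), zero_rpow hs.ne']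
  | succ m ih =>
    rw [sum_range_succ, le_div_iff₀ hs, add_mul]
    rw [le_div_iff₀ hs] at ih
    have step := one_sub_mul_rpow_neg_le_rpow_sub_rpow hs0.le hs1.le
      (x := (m + 1 : ℕ)) (by simp)
    push_cast at step ⊢
    simp only [add_sub_cancel_right] at step
    linarith

lemma rpow_neg_le_two_mul_rpow_neg {u m x : ℝ} (hu0 : 0 ≤ u) (hu1 : u ≤ 1) (hm : 0 < m)
    (hmx : m ≤ 2 * x) : x ^ (-u) ≤ 2 * m ^ (-u) :=
  calc x ^ (-u) ≤ (m / 2) ^ (-u) := rpow_le_rpow_of_nonpos (by positivity) (by linarith)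
        (by linarith)
    _ = 2 ^ u * m ^ (-u) := by
      rw [div_rpow hm.le zero_le_two, rpow_neg zero_le_two, div_inv_eq_mul, mul_comm]
    _ ≤ 2 ^ (1 : ℝ) * m ^ (-u) := by gcongr; norm_num
    _ = 2 * m ^ (-u) := by rw [rpow_one]

lemma rpow_neg_mul_rpow_neg_le_of_add_eq (hs0 : 0 < s) (hs1 : s ≤ 1) (ht0 : 0 < t)
    (ht1 : t ≤ 1) {a b m : ℕ} (hab : a + b = m) :
    (a : ℝ) ^ (-s) * (b : ℝ) ^ (-t) ≤
      2 * (m : ℝ) ^ (-t) * (a : ℝ) ^ (-s) + 2 * (m : ℝ) ^ (-s) * (b : ℝ) ^ (-t) := by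
  have hA : 0 ≤ 2 * (m : ℝ) ^ (-t) * (a : ℝ) ^ (-s) := by positivity
  have hB : 0 ≤ 2 * (m : ℝ) ^ (-s) * (b : ℝ) ^ (-t) := by positivity
  rcases Nat.eq_zero_or_pos a with rfl | ha
  · simp [zero_rpow (neg_ne_zero.2 hs0.ne'), hB]
  rcases Nat.eq_zero_or_pos b with rfl | hb
  · simp [zero_rpow (neg_ne_zero.2 ht0.ne'), hA]
  have hm : (0 : ℝ) < m := by exact_mod_cast (show 0 < m by omega)
  have hsum : (m : ℝ) = a + b := by exact_mod_cast hab.symm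
  rcases le_total a b with hle | hle
  · have hble : (b : ℝ) ^ (-t) ≤ 2 * (m : ℝ) ^ (-t) :=
      rpow_neg_le_two_mul_rpow_neg ht0.le ht1 hm
        (by rw [hsum]; linarith [(Nat.cast_le (α := ℝ)).2 hle])
    nlinarith [mul_le_mul_of_nonneg_left hble (rpow_nonneg (Nat.cast_nonneg a) (-s))]
  · have hale : (a : ℝ) ^ (-s) ≤ 2 * (m : ℝ) ^ (-s) :=
      rpow_neg_le_two_mul_rpow_neg hs0.le hs1 hm
        (by rw [hsum]; linarith [(Nat.cast_le (α := ℝ)).2 hle])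
    nlinarith [mul_le_mul_of_nonneg_right hale (rpow_nonneg (Nat.cast_nonneg b) (-t))]

lemma sum_antidiagonal_rpow_neg_mul_rpow_neg_le (hs0 : 0 < s) (hs1 : s < 1) (ht0 : 0 < t)
    (ht1 : t < 1) (m : ℕ) :
    ∑ p ∈ antidiagonal m, (p.1 : ℝ) ^ (-s) * (p.2 : ℝ) ^ (-t) ≤
      (2 / (1 - s) + 2 / (1 - t)) * (m : ℝ) ^ (1 - s - t) := by
  have hs : 0 < 1 - s := by linarith
  have ht : 0 < 1 - t := by linarith
  rcases Nat.eq_zero_or_pos m with rfl | hm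
  · have : 0 ≤ (2 / (1 - s) + 2 / (1 - t)) * (0 : ℝ) ^ (1 - s - t) := by positivity
    simpa [zero_rpow (neg_ne_zero.2 hs0.ne')] using this
  have hm' : (0 : ℝ) < m := by exact_mod_cast hm
  have hfst : ∑ p ∈ antidiagonal m, (p.1 : ℝ) ^ (-s) ≤ (m : ℝ) ^ (1 - s) / (1 - s) := by
    rw [Nat.sum_antidiagonal_eq_sum_range_succ (fun a _ => (a : ℝ) ^ (-s))]
    exact sum_range_rpow_neg_le hs0 hs1 m
  have hsnd : ∑ p ∈ antidiagonal m, (p.2 : ℝ) ^ (-t) ≤ (m : ℝ) ^ (1 - t) / (1 - t) := by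
    rw [← Nat.sum_antidiagonal_swap]
    simp only [Prod.snd_swap]
    rw [Nat.sum_antidiagonal_eq_sum_range_succ (fun a _ => (a : ℝ) ^ (-t))]
    exact sum_range_rpow_neg_le ht0 ht1 m
  calc ∑ p ∈ antidiagonal m, (p.1 : ℝ) ^ (-s) * (p.2 : ℝ) ^ (-t)
      ≤ ∑ p ∈ antidiagonal m,
          (2 * (m : ℝ) ^ (-t) * (p.1 : ℝ) ^ (-s) + 2 * (m : ℝ) ^ (-s) * (p.2 : ℝ) ^ (-t)) :=
        sum_le_sum fun p hp => rpow_neg_mul_rpow_neg_le_of_add_eq hs0 hs1.le ht0 ht1.le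
          (mem_antidiagonal.1 hp)
    _ = 2 * (m : ℝ) ^ (-t) * ∑ p ∈ antidiagonal m, (p.1 : ℝ) ^ (-s) +
          2 * (m : ℝ) ^ (-s) * ∑ p ∈ antidiagonal m, (p.2 : ℝ) ^ (-t) := by
        rw [sum_add_distrib, mul_sum, mul_sum]
    _ ≤ 2 * (m : ℝ) ^ (-t) * ((m : ℝ) ^ (1 - s) / (1 - s)) +
          2 * (m : ℝ) ^ (-s) * ((m : ℝ) ^ (1 - t) / (1 - t)) := by gcongr
    _ = (2 / (1 - s) + 2 / (1 - t)) * (m : ℝ) ^ (1 - s - t) := by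
        have e1 : (m : ℝ) ^ (-t) * (m : ℝ) ^ (1 - s) = (m : ℝ) ^ (1 - s - t) := by
          rw [← rpow_add hm']; ring_nf
        have e2 : (m : ℝ) ^ (-s) * (m : ℝ) ^ (1 - t) = (m : ℝ) ^ (1 - s - t) := by
          rw [← rpow_add hm']; ring_nf
        linear_combination (2 / (1 - s)) * e1 + (2 / (1 - t)) * e2

lemma sum_antidiagonal_mul_le_of_le_rpow_neg {f g : ℕ → ℝ} {c d : ℝ}
    (hs0 : 0 < s) (hs1 : s < 1) (ht0 : 0 < t) (ht1 : t < 1)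
    (hf0 : ∀ a, 0 ≤ f a) (hf : ∀ a, f a ≤ c * (a : ℝ) ^ (-s))
    (hg0 : ∀ b, 0 ≤ g b) (hg : ∀ b, g b ≤ d * (b : ℝ) ^ (-t)) (m : ℕ) :
    ∑ p ∈ antidiagonal m, f p.1 * g p.2 ≤
      c * d * (2 / (1 - s) + 2 / (1 - t)) * (m : ℝ) ^ (1 - s - t) := by
  have hc : 0 ≤ c := by simpa using (hf0 1).trans (hf 1)
  have hd : 0 ≤ d := by simpa using (hg0 1).trans (hg 1)
  calc ∑ p ∈ antidiagonal m, f p.1 * g p.2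
      ≤ ∑ p ∈ antidiagonal m, c * (p.1 : ℝ) ^ (-s) * (d * (p.2 : ℝ) ^ (-t)) :=
        sum_le_sum fun p _ => mul_le_mul (hf p.1) (hg p.2) (hg0 p.2) ((hf0 p.1).trans (hf p.1))
    _ = c * d * ∑ p ∈ antidiagonal m, (p.1 : ℝ) ^ (-s) * (p.2 : ℝ) ^ (-t) := by
        rw [mul_sum]; exact sum_congr rfl fun p _ => by ring
    _ ≤ c * d * ((2 / (1 - s) + 2 / (1 - t)) * (m : ℝ) ^ (1 - s - t)) := by
        gcongr; exact sum_antidiagonal_rpow_neg_mul_rpow_neg_le hs0 hs1 ht0 ht1 m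
    _ = _ := by ring

end PowerSums

namespace SevenTupleSum

noncomputable def weight (a : ℕ) : ℝ := (a : ℝ) ^ (-(5 / 7) : ℝ)

noncomputable def pairSum (m : ℕ) : ℝ := ∑ p ∈ antidiagonal m, weight p.1 * weight p.2

noncomputable def tailSum (d : ℕ) : ℝ :=
  weight d * ∑ e ∈ range d, weight e * pairSum (d + e)

noncomputable def innerSum (l : ℕ) : ℝ := ∑ p ∈ antidiagonal l, weight p.1 * tailSum p.2

noncomputable def totalSum (n : ℕ) : ℝ := ∑ p ∈ antidiagonal n, pairSum p.1 * innerSum p.2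

lemma weight_nonneg (a : ℕ) : 0 ≤ weight a := rpow_nonneg (Nat.cast_nonneg a) _

lemma pairSum_nonneg (m : ℕ) : 0 ≤ pairSum m :=
  sum_nonneg fun p _ => mul_nonneg (weight_nonneg p.1) (weight_nonneg p.2)

lemma tailSum_nonneg (d : ℕ) : 0 ≤ tailSum d :=
  mul_nonneg (weight_nonneg d) <|
    sum_nonneg fun e _ => mul_nonneg (weight_nonneg e) (pairSum_nonneg _)

lemma innerSum_nonneg (l : ℕ) : 0 ≤ innerSum l :=
  sum_nonneg fun p _ => mul_nonneg (weight_nonneg p.1) (tailSum_nonneg p.2)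

lemma pairSum_le (m : ℕ) : pairSum m ≤ 14 * (m : ℝ) ^ (-(3 / 7) : ℝ) := by
  have h := sum_antidiagonal_mul_le_of_le_rpow_neg (s := 5 / 7) (t := 5 / 7) (c := 1) (d := 1)
    (by norm_num) (by norm_num) (by norm_num) (by norm_num) weight_nonneg
    (fun a => (one_mul _).ge) weight_nonneg (fun a => (one_mul _).ge) m
  norm_num at h ⊢
  exact h

lemma tailSum_le (d : ℕ) : tailSum d ≤ 49 * (d : ℝ) ^ (-(6 / 7) : ℝ) := by
  rcases Nat.eq_zero_or_pos d with rfl | hd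
  · simp [tailSum]
  have hd' : (0 : ℝ) < d := by exact_mod_cast hd
  have hpair (e : ℕ) : pairSum (d + e) ≤ 14 * (d : ℝ) ^ (-(3 / 7) : ℝ) := by
    refine (pairSum_le _).trans (mul_le_mul_of_nonneg_left ?_ (by norm_num))
    exact rpow_le_rpow_of_nonpos hd' (by exact_mod_cast d.le_add_right e) (by norm_num)
  have hweights : ∑ e ∈ range d, weight e ≤ 7 / 2 * (d : ℝ) ^ (2 / 7 : ℝ) :=
    calc ∑ e ∈ range d, weight e ≤ ∑ e ∈ range (d + 1), weight e :=
          sum_le_sum_of_subset_of_nonneg (range_subset_range.2 d.le_succ)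
            fun e _ _ => weight_nonneg e
      _ ≤ (d : ℝ) ^ (1 - 5 / 7 : ℝ) / (1 - 5 / 7) :=
          sum_range_rpow_neg_le (by norm_num) (by norm_num) d
      _ = 7 / 2 * (d : ℝ) ^ (2 / 7 : ℝ) := by norm_num; ring
  calc tailSum d ≤ weight d * ∑ e ∈ range d, weight e * (14 * (d : ℝ) ^ (-(3 / 7) : ℝ)) :=
        mul_le_mul_of_nonneg_left
          (sum_le_sum fun e _ => mul_le_mul_of_nonneg_left (hpair e) (weight_nonneg e))
          (weight_nonneg d)
    _ = 14 * (d : ℝ) ^ (-(5 / 7) : ℝ) * (d : ℝ) ^ (-(3 / 7) : ℝ) * ∑ e ∈ range d, weight e := by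
        rw [← sum_mul, weight]; ring
    _ ≤ 14 * (d : ℝ) ^ (-(5 / 7) : ℝ) * (d : ℝ) ^ (-(3 / 7) : ℝ) *
          (7 / 2 * (d : ℝ) ^ (2 / 7 : ℝ)) := by gcongr
    _ = 49 * (d : ℝ) ^ (-(5 / 7) + -(3 / 7) + 2 / 7 : ℝ) := by
        rw [rpow_add hd', rpow_add hd']; ring
    _ = 49 * (d : ℝ) ^ (-(6 / 7) : ℝ) := by norm_num

lemma innerSum_le (l : ℕ) : innerSum l ≤ 1029 * (l : ℝ) ^ (-(4 / 7) : ℝ) := by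
  have h := sum_antidiagonal_mul_le_of_le_rpow_neg (s := 5 / 7) (t := 6 / 7) (c := 1) (d := 49)
    (by norm_num) (by norm_num) (by norm_num) (by norm_num) weight_nonneg
    (fun a => (one_mul _).ge) tailSum_nonneg tailSum_le l
  norm_num at h ⊢
  exact h

lemma totalSum_le (n : ℕ) : totalSum n ≤ 7 ^ 6 := by
  have h := sum_antidiagonal_mul_le_of_le_rpow_neg (s := 3 / 7) (t := 4 / 7) (c := 14)
    (d := 1029) (by norm_num) (by norm_num) (by norm_num) (by norm_num) pairSum_nonneg
    pairSum_le innerSum_nonneg innerSum_le n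
  norm_num at h ⊢
  exact h

/-- A solution `x` is recorded as `⟨(x₁ + x₂, x₃ + x₄), (x₁, x₂), ⟨(x₃, x₄), x₅, (x₆, x₇)⟩⟩`,
so that the sum over solutions factors into the nested convolutions defining `totalSum`. -/
abbrev Code : Type := Σ _ : ℕ × ℕ, (ℕ × ℕ) × Σ _ : ℕ × ℕ, Σ _ : ℕ, ℕ × ℕ

def solutionCodes (n : ℕ) : Finset Code :=
  (antidiagonal n).sigma fun kl => antidiagonal kl.1 ×ˢ
    (antidiagonal kl.2).sigma fun q => (range q.2).sigma fun e => antidiagonal (q.2 + e)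

noncomputable def codeWeight (w : Code) : ℝ :=
  (weight w.2.1.1 * weight w.2.1.2) * (weight w.2.2.1.1 * (weight w.2.2.1.2 *
    (weight w.2.2.2.1 * (weight w.2.2.2.2.1 * weight w.2.2.2.2.2))))

lemma sum_solutionCodes (n : ℕ) : ∑ w ∈ solutionCodes n, codeWeight w = totalSum n := by
  simp only [solutionCodes, totalSum, sum_sigma]
  refine sum_congr rfl fun kl _ => ?_
  rw [sum_product, pairSum, innerSum, sum_mul_sum]
  simp only [sum_sigma, tailSum, pairSum, mul_sum, codeWeight]

def encode (p : Fin 7 → ℕ) : Code :=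
  ⟨(p 0 + p 1, p 2 + p 3), (p 0, p 1), ⟨(p 2, p 3), p 4, (p 5, p 6)⟩⟩

lemma encode_injective : Function.Injective encode := by
  intro p q h
  simp only [encode, Sigma.mk.inj_iff, Prod.mk.injEq, heq_eq_eq] at h
  funext i
  fin_cases i <;> simp [h]

lemma encode_mem_solutionCodes {n : ℕ} {p : Fin 7 → ℕ} (hsum : p 0 + p 1 + p 2 + p 3 = n)
    (hbal : p 3 + p 4 = p 5 + p 6) (hlt : p 4 < p 3) : encode p ∈ solutionCodes n := by
  simp only [solutionCodes, encode, mem_sigma, mem_product,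
    HasAntidiagonal.mem_antidiagonal, mem_range]
  exact ⟨(add_assoc _ _ _).symm.trans hsum, trivial, trivial, hlt, hbal.symm⟩

lemma prod_weight_eq_codeWeight_encode (p : Fin 7 → ℕ) :
    ∏ i, weight (p i) = codeWeight (encode p) := by
  simp only [Fin.prod_univ_seven, codeWeight, encode]
  ring

lemma codeWeight_nonneg (w : Code) : 0 ≤ codeWeight w := by
  simp only [codeWeight, weight]
  positivity

lemma sum_prod_weight_le_totalSum {n : ℕ} {S : Set (Fin 7 → ℕ)}
    (hS : ∀ p ∈ S, p 0 + p 1 + p 2 + p 3 = n ∧ p 3 + p 4 = p 5 + p 6 ∧ p 4 < p 3)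
    (F : Finset S) : ∑ p ∈ F, ∏ i, weight ((p : Fin 7 → ℕ) i) ≤ totalSum n := by
  let code : S ↪ _ := ⟨encode ∘ Subtype.val, encode_injective.comp Subtype.val_injective⟩
  calc ∑ p ∈ F, ∏ i, weight ((p : Fin 7 → ℕ) i) = ∑ w ∈ F.map code, codeWeight w := by
        rw [sum_map]
        exact sum_congr rfl fun p _ => prod_weight_eq_codeWeight_encode p
    _ ≤ ∑ w ∈ solutionCodes n, codeWeight w := by
        refine sum_le_sum_of_subset_of_nonneg ?_ fun w _ _ => codeWeight_nonneg w
        intro w hw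
        obtain ⟨p, -, rfl⟩ := mem_map.1 hw
        obtain ⟨hsum, hbal, hlt⟩ := hS p p.2
        exact encode_mem_solutionCodes hsum hbal hlt
    _ = totalSum n := sum_solutionCodes n

end SevenTupleSum

theorem stmt8 :
    ∃ C : ℝ, 0 < C ∧ ∀ n : ℕ, 2 ≤ n →
      (∑' p : {p : Fin 7 → ℕ // (∀ i, 0 < p i) ∧ p 0 + p 1 + p 2 + p 3 = n ∧
          p 3 + p 4 = p 5 + p 6 ∧ p 4 < p 3},
        ∏ i, ((p : Fin 7 → ℕ) i : ℝ) ^ (-5/7 : ℝ)) ≤ C := by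
  refine ⟨7 ^ 6, by norm_num, fun n _ => tsum_le_of_sum_le' (by norm_num) fun F => ?_⟩
  have h := SevenTupleSum.sum_prod_weight_le_totalSum (n := n)
    (S := {p | (∀ i, 0 < p i) ∧ p 0 + p 1 + p 2 + p 3 = n ∧
      p 3 + p 4 = p 5 + p 6 ∧ p 4 < p 3}) (fun p hp => hp.2) F
  simp only [SevenTupleSum.weight, ← neg_div] at h
  exact h.trans (SevenTupleSum.totalSum_le n)
end

section
/- There exists a constant C > 0 such that for every integer n ≥ 2, ∑ over 6-tuples of positive integers (x₁,...,x₆) with x₁+x₂+x₃+x₄ = n and x₄+x₃ = x₅+x₆ of x₁^(-5/7)·x₂^(-5/7)·x₃^(-5/7)·x₄^(-5/7)·x₅^(-5/7)·x₆^(-5/7) ≤ C. -/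
lemma bern {t u : ℝ} (ht0 : 0 ≤ t) (ht1 : t ≤ 1) (hu : 0 ≤ u) : u ^ t ≤ t * u + (1 - t) := by
  have h := Real.geom_mean_le_arith_mean2_weighted ht0 (by linarith : (0:ℝ) ≤ 1 - t) hu
    zero_le_one (by ring)
  simpa using h

lemma partial_sum {t : ℝ} (ht0 : 0 < t) (ht1 : t < 1) :
    ∀ N : ℕ, ∑ a ∈ Finset.Icc 1 N, (a:ℝ)^(-t) ≤ (N:ℝ)^(1-t) / (1-t) := by
  intro N
  induction N with
  | zero => simp [Real.zero_rpow (by linarith : (1:ℝ) - t ≠ 0)]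
  | succ N ih =>
    rw [Finset.sum_Icc_succ_top (by omega : 1 ≤ N + 1)]
    set x : ℝ := (N:ℝ) + 1 with hxdef
    have hx : (0:ℝ) < x := by positivity
    have hxpow : x ^ (1-t) = x * x^(-t) := by
      rw [show (1:ℝ)-t = 1 + -t by ring, Real.rpow_add hx, Real.rpow_one]
    have hu : (0:ℝ) ≤ (N:ℝ)/x := by positivity
    have hb : ((N:ℝ)/x)^(1-t) ≤ (1-t)*((N:ℝ)/x) + t := by
      have := bern (by linarith : (0:ℝ) ≤ 1 - t) (by linarith) hu
      linarith [this]
    have hd : ((N:ℝ)/x)^(1-t) = (N:ℝ)^(1-t) / x^(1-t) :=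
      Real.div_rpow (Nat.cast_nonneg N) hx.le _
    have hxp : (0:ℝ) < x ^ (1-t) := Real.rpow_pos_of_pos hx _
    have key : (N:ℝ)^(1-t) ≤ ((1-t)*((N:ℝ)/x) + t) * x^(1-t) := by
      have := mul_le_mul_of_nonneg_right hb hxp.le
      rwa [hd, div_mul_cancel₀ _ hxp.ne'] at this
    have key2 : (N:ℝ)^(1-t) + (1-t) * x^(-t) ≤ x^(1-t) := by
      rw [hxpow] at key ⊢
      have hxne : x ≠ 0 := hx.ne'
      have : ((1-t)*((N:ℝ)/x) + t) * (x * x^(-t)) = (1-t)*(N:ℝ)*x^(-t) + t*x*x^(-t) := by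
        field_simp
      rw [this] at key
      have e2 : x*x^(-t) = (N:ℝ)*x^(-t) + x^(-t) := by rw [hxdef]; ring
      have e3 : (1-t)*(N:ℝ)*x^(-t) = (N:ℝ)*x^(-t) - t*(N:ℝ)*x^(-t) := by ring
      have e4 : (1-t)*x^(-t) = x^(-t) - t*x^(-t) := by ring
      have e5 : t*x*x^(-t) = t*(N:ℝ)*x^(-t) + t*x^(-t) := by rw [hxdef]; ring
      linarith
    have hcast : ((N+1:ℕ):ℝ) = x := by push_cast; rfl
    rw [hcast]
    have h1t : (0:ℝ) < 1 - t := by linarith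
    have h5 : ((N:ℝ)^(1-t) + (1-t)*x^(-t))/(1-t) ≤ x^(1-t)/(1-t) :=
      by gcongr
    have h6 : ((N:ℝ)^(1-t) + (1-t)*x^(-t))/(1-t) = (N:ℝ)^(1-t)/(1-t) + x^(-t) := by
      field_simp
    linarith [ih]

lemma zeta_aux : ∀ N : ℕ, 1 ≤ N →
    ∑ a ∈ Finset.Icc 1 N, (a:ℝ)^(-(9/7):ℝ) ≤ 9/2 - (7/2)*(N:ℝ)^(-(2/7):ℝ) := by
  intro N hN
  induction N, hN using Nat.le_induction with
  | base => norm_num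
  | succ N hN ih =>
    rw [Finset.sum_Icc_succ_top (by omega : 1 ≤ N + 1)]
    set x : ℝ := (N:ℝ) + 1 with hxdef
    have hy : (1:ℝ) ≤ (N:ℝ) := by exact_mod_cast hN
    have hx : (0:ℝ) < x := by positivity
    have hu0 : (0:ℝ) < (N:ℝ)/x := by positivity
    have hb : ((N:ℝ)/x)^((2:ℝ)/7) ≤ 1 - (2/7)/x := by
      have h := bern (by norm_num : (0:ℝ) ≤ 2/7) (by norm_num) hu0.le
      have he : (2/7)*((N:ℝ)/x) + (1 - 2/7) = 1 - (2/7)/x := by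
        field_simp; ring
      linarith [he ▸ h]
    have ha : (0:ℝ) < 1 + (2/7)/x := by positivity
    have hup : (0:ℝ) < ((N:ℝ)/x)^((2:ℝ)/7) := Real.rpow_pos_of_pos hu0 _
    have hinv : 1 + (2/7)/x ≤ ((N:ℝ)/x)^(-(2/7):ℝ) := by
      rw [Real.rpow_neg hu0.le]
      have hw1 : ((N:ℝ)/x)^((2:ℝ)/7) * (((N:ℝ)/x)^((2:ℝ)/7))⁻¹ = 1 := mul_inv_cancel₀ hup.ne'
      have h2 : ((N:ℝ)/x)^((2:ℝ)/7) * (1 + (2/7)/x) ≤ 1 := by nlinarith [sq_nonneg ((2/7)/x)]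
      nlinarith [hup, hw1, h2]
    have hmul : ((N:ℝ))^(-(2/7):ℝ) = x^(-(2/7):ℝ) * ((N:ℝ)/x)^(-(2/7):ℝ) := by
      rw [← Real.mul_rpow hx.le hu0.le, mul_div_cancel₀ _ hx.ne']
    have hxp2 : (0:ℝ) < x^(-(2/7):ℝ) := Real.rpow_pos_of_pos hx _
    have h9 : x^(-(9/7):ℝ) = x^(-(2/7):ℝ) * x⁻¹ := by
      rw [show (-(9/7):ℝ) = -(2/7) + -1 by norm_num, Real.rpow_add hx, Real.rpow_neg_one]
    have key : x^(-(2/7):ℝ) + (2/7)*x^(-(9/7):ℝ) ≤ (N:ℝ)^(-(2/7):ℝ) := by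
      rw [hmul, h9]
      have := mul_le_mul_of_nonneg_left hinv hxp2.le
      calc x^(-(2/7):ℝ) + (2/7)*(x^(-(2/7):ℝ) * x⁻¹)
          = x^(-(2/7):ℝ) * (1 + (2/7)/x) := by field_simp
        _ ≤ _ := this
    have hcast : ((N+1:ℕ):ℝ) = x := by push_cast; rfl
    rw [hcast]
    linarith [key, ih]

noncomputable def Tm (m : ℕ) : ℝ :=
  ∑ a ∈ Finset.Ioo 0 m, (a:ℝ)^(-5/7:ℝ) * (((m-a : ℕ)):ℝ)^(-5/7:ℝ)

lemma Tm_nonneg (m : ℕ) : 0 ≤ Tm m := by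
  refine Finset.sum_nonneg fun a _ => ?_
  positivity

lemma half_bound {m k : ℕ} (hm : 0 < m) (h : m ≤ 2*k) :
    ((k:ℝ))^(-5/7:ℝ) ≤ 2^((5:ℝ)/7) * (m:ℝ)^(-5/7:ℝ) := by
  have hm2 : (0:ℝ) < (m:ℝ)/2 := by positivity
  have hk : (m:ℝ)/2 ≤ (k:ℝ) := by
    have : (m:ℝ) ≤ 2*(k:ℝ) := by exact_mod_cast h
    linarith
  have h1 : ((k:ℝ))^(-5/7:ℝ) ≤ ((m:ℝ)/2)^(-5/7:ℝ) :=
    Real.rpow_le_rpow_of_nonpos hm2 hk (by norm_num)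
  have h2 : ((m:ℝ)/2)^(-5/7:ℝ) = 2^((5:ℝ)/7) * (m:ℝ)^(-5/7:ℝ) := by
    rw [Real.div_rpow (by positivity) (by norm_num),
      show (-5/7:ℝ) = -(5/7) by norm_num,
      Real.rpow_neg (by norm_num : (0:ℝ) ≤ 2)]
    field_simp
  linarith

lemma reflect_sum (m : ℕ) :
    ∑ a ∈ Finset.Ioo 0 m, (((m-a : ℕ)):ℝ)^(-5/7:ℝ) = ∑ a ∈ Finset.Ioo 0 m, (a:ℝ)^(-5/7:ℝ) := by
  refine Finset.sum_nbij' (fun a => m - a) (fun a => m - a) ?_ ?_ ?_ ?_ (fun a ha => rfl) <;>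
    simp only [Finset.mem_Ioo] <;> intros <;> omega

lemma Tm_le (m : ℕ) : Tm m ≤ 14 * (m:ℝ)^(-3/7:ℝ) := by
  rcases Nat.eq_zero_or_pos m with hm | hm
  · subst hm
    simp [Tm, Real.zero_rpow (by norm_num : (-3/7:ℝ) ≠ 0)]
  have hmR : (0:ℝ) < (m:ℝ) := by exact_mod_cast hm
  have step1 : ∀ a ∈ Finset.Ioo 0 m,
      (a:ℝ)^(-5/7:ℝ) * (((m-a : ℕ)):ℝ)^(-5/7:ℝ) ≤
        2^((5:ℝ)/7) * (m:ℝ)^(-5/7:ℝ) * ((a:ℝ)^(-5/7:ℝ) + (((m-a : ℕ)):ℝ)^(-5/7:ℝ)) := by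
    intro a ha
    simp only [Finset.mem_Ioo] at ha
    have hA : (0:ℝ) ≤ (a:ℝ)^(-5/7:ℝ) := Real.rpow_nonneg (by positivity) _
    have hB : (0:ℝ) ≤ (((m-a:ℕ)):ℝ)^(-5/7:ℝ) := Real.rpow_nonneg (by positivity) _
    have hP : (0:ℝ) ≤ 2^((5:ℝ)/7) * (m:ℝ)^(-5/7:ℝ) := by positivity
    rcases le_total a (m - a) with h | h
    · have hb2 : (((m-a:ℕ)):ℝ)^(-5/7:ℝ) ≤ 2^((5:ℝ)/7) * (m:ℝ)^(-5/7:ℝ) :=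
        half_bound hm (by omega)
      nlinarith
    · have hb2 : ((a:ℕ):ℝ)^(-5/7:ℝ) ≤ 2^((5:ℝ)/7) * (m:ℝ)^(-5/7:ℝ) :=
        half_bound hm (by omega)
      nlinarith
  have psum : ∑ a ∈ Finset.Ioo 0 m, (a:ℝ)^(-5/7:ℝ) ≤ (7/2) * (m:ℝ)^((2:ℝ)/7) := by
    have hsub : Finset.Ioo 0 m ⊆ Finset.Icc 1 m := by
      intro a ha; simp only [Finset.mem_Ioo] at ha; simp only [Finset.mem_Icc]; omega
    have h1 : ∑ a ∈ Finset.Ioo 0 m, (a:ℝ)^(-5/7:ℝ) ≤ ∑ a ∈ Finset.Icc 1 m, (a:ℝ)^(-5/7:ℝ) :=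
      Finset.sum_le_sum_of_subset_of_nonneg hsub
        (fun a _ _ => Real.rpow_nonneg (by positivity) _)
    have h2 := partial_sum (by norm_num : (0:ℝ) < 5/7) (by norm_num) m
    have e1 : ∑ a ∈ Finset.Icc 1 m, (a:ℝ)^(-5/7:ℝ)
        = ∑ a ∈ Finset.Icc 1 m, (a:ℝ)^(-(5/7):ℝ) := by norm_num
    have e2 : ((m:ℝ))^((1:ℝ)-5/7) / ((1:ℝ)-5/7) = (7/2) * (m:ℝ)^((2:ℝ)/7) := by
      rw [show ((1:ℝ)-5/7) = 2/7 by norm_num]; ring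
    calc _ ≤ _ := h1
      _ = ∑ a ∈ Finset.Icc 1 m, (a:ℝ)^(-(5/7):ℝ) := e1
      _ ≤ ((m:ℝ))^((1:ℝ)-5/7) / ((1:ℝ)-5/7) := h2
      _ = (7/2) * (m:ℝ)^((2:ℝ)/7) := e2
  calc Tm m ≤ ∑ a ∈ Finset.Ioo 0 m,
        2^((5:ℝ)/7) * (m:ℝ)^(-5/7:ℝ) * ((a:ℝ)^(-5/7:ℝ) + (((m-a : ℕ)):ℝ)^(-5/7:ℝ)) :=
      Finset.sum_le_sum step1
    _ = 2^((5:ℝ)/7) * (m:ℝ)^(-5/7:ℝ) *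
        (2 * ∑ a ∈ Finset.Ioo 0 m, (a:ℝ)^(-5/7:ℝ)) := by
      rw [← Finset.mul_sum, Finset.sum_add_distrib, reflect_sum]; ring
    _ ≤ 2^((5:ℝ)/7) * (m:ℝ)^(-5/7:ℝ) * (2 * ((7/2) * (m:ℝ)^((2:ℝ)/7))) := by
      have : (0:ℝ) ≤ 2^((5:ℝ)/7) * (m:ℝ)^(-5/7:ℝ) := by positivity
      nlinarith [psum, this, Finset.sum_nonneg (fun (a:ℕ) (_ : a ∈ Finset.Ioo 0 m) =>
        Real.rpow_nonneg (Nat.cast_nonneg a) (-5/7:ℝ))]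
    _ = 7 * 2^((5:ℝ)/7) * ((m:ℝ)^(-5/7:ℝ) * (m:ℝ)^((2:ℝ)/7)) := by ring
    _ = 7 * 2^((5:ℝ)/7) * (m:ℝ)^(-3/7:ℝ) := by
      rw [← Real.rpow_add hmR]; norm_num
    _ ≤ 14 * (m:ℝ)^(-3/7:ℝ) := by
      have h2 : (2:ℝ)^((5:ℝ)/7) ≤ 2 := by
        calc (2:ℝ)^((5:ℝ)/7) ≤ (2:ℝ)^(1:ℝ) :=
          Real.rpow_le_rpow_of_exponent_le one_le_two (by norm_num)
        _ = 2 := Real.rpow_one 2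
      have h3 : (0:ℝ) ≤ (m:ℝ)^(-3/7:ℝ) := Real.rpow_nonneg hmR.le _
      nlinarith

noncomputable def Fm (M a : ℕ) : ℝ := (a:ℝ)^(-5/7:ℝ) * (((M-a : ℕ)):ℝ)^(-5/7:ℝ)

lemma sum_prod3 (s t u : Finset ℕ) (f g h : ℕ → ℝ) :
    ∑ x ∈ s ×ˢ (t ×ˢ u), f x.1 * (g x.2.1 * h x.2.2)
      = (∑ a ∈ s, f a) * ((∑ b ∈ t, g b) * (∑ c ∈ u, h c)) := by
  rw [Finset.sum_product]
  simp_rw [Finset.sum_product, ← Finset.mul_sum, ← Finset.sum_mul]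

def An (n : ℕ) : Finset (Fin 6 → ℕ) :=
  (Fintype.piFinset fun _ => Finset.range (n+1)).filter
    fun p => (∀ i, 0 < p i) ∧ p 0 + p 1 + p 2 + p 3 = n ∧ p 3 + p 2 = p 4 + p 5

lemma An_sum_eq (n : ℕ) :
    ∑ p ∈ An n, ∏ i, ((p i : ℝ))^(-5/7:ℝ)
      = ∑ m ∈ Finset.Icc 2 n, Tm (n - m) * (Tm m * Tm m) := by
  have hR : ∀ m ∈ Finset.Icc 2 n, Tm (n-m) * (Tm m * Tm m)
      = ∑ x ∈ Finset.Ioo 0 (n-m) ×ˢ (Finset.Ioo 0 m ×ˢ Finset.Ioo 0 m),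
          Fm (n-m) x.1 * (Fm m x.2.1 * Fm m x.2.2) := by
    intro m _
    rw [sum_prod3]
    rfl
  rw [Finset.sum_congr rfl hR,
    ← Finset.sum_sigma (Finset.Icc 2 n)
      (fun m => Finset.Ioo 0 (n-m) ×ˢ (Finset.Ioo 0 m ×ˢ Finset.Ioo 0 m))
      (fun x => Fm (n - x.1) x.2.1 * (Fm x.1 x.2.2.1 * Fm x.1 x.2.2.2))]
  refine Finset.sum_nbij' (fun p => ⟨p 2 + p 3, (p 0, p 2, p 4)⟩)
    (fun x => ![x.2.1, n - x.1 - x.2.1, x.2.2.1, x.1 - x.2.2.1, x.2.2.2, x.1 - x.2.2.2])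
    ?_ ?_ ?_ ?_ ?_
  · intro p hp
    simp only [An, Finset.mem_filter, Fintype.mem_piFinset, Finset.mem_range] at hp
    obtain ⟨hrange, hpos, h1, h2⟩ := hp
    have q0 := hpos 0; have q1 := hpos 1; have q2 := hpos 2; have q3 := hpos 3
    have q4 := hpos 4; have q5 := hpos 5
    simp only [Finset.mem_sigma, Finset.mem_product, Finset.mem_Ioo, Finset.mem_Icc]
    refine ⟨by omega, by omega, by omega, by omega⟩
  · intro x hx
    obtain ⟨m, a, b, c⟩ := x
    simp only [Finset.mem_sigma, Finset.mem_product, Finset.mem_Ioo, Finset.mem_Icc] at hx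
    obtain ⟨⟨hm2, hmn⟩, ⟨ha0, ha⟩, ⟨hb0, hb⟩, ⟨hc0, hc⟩⟩ := hx
    simp only [An, Finset.mem_filter, Fintype.mem_piFinset, Finset.mem_range]
    refine ⟨?_, ?_, ?_, ?_⟩
    · intro i; fin_cases i <;> simp [show (5:Fin 6) = (4:Fin 5).succ from rfl, Matrix.cons_val_succ] <;> omega
    · intro i; fin_cases i <;> simp [show (5:Fin 6) = (4:Fin 5).succ from rfl, Matrix.cons_val_succ] <;> omega
    · simp [show (5:Fin 6) = (4:Fin 5).succ from rfl, Matrix.cons_val_succ]; omega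
    · simp [show (5:Fin 6) = (4:Fin 5).succ from rfl, Matrix.cons_val_succ]; omega
  · intro p hp
    simp only [An, Finset.mem_filter, Fintype.mem_piFinset, Finset.mem_range] at hp
    obtain ⟨hrange, hpos, h1, h2⟩ := hp
    have q0 := hpos 0; have q1 := hpos 1; have q4 := hpos 4; have q5 := hpos 5
    have e5 : p (Fin.succ 4) = p 5 := rfl
    funext i; fin_cases i <;> simp [show (5:Fin 6) = (4:Fin 5).succ from rfl, Matrix.cons_val_succ] <;> omega
  · intro x hx
    obtain ⟨m, a, b, c⟩ := x
    simp only [Finset.mem_sigma, Finset.mem_product, Finset.mem_Ioo, Finset.mem_Icc] at hx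
    simp only [Matrix.cons_val_zero, Matrix.cons_val_one, Matrix.head_cons]
    refine Sigma.ext ?_ ?_ <;> simp [show (5:Fin 6) = (4:Fin 5).succ from rfl, Matrix.cons_val_succ] <;> omega
  · intro p hp
    simp only [An, Finset.mem_filter, Fintype.mem_piFinset, Finset.mem_range] at hp
    obtain ⟨hrange, hpos, h1, h2⟩ := hp
    have q0 := hpos 0; have q1 := hpos 1; have q2 := hpos 2; have q3 := hpos 3
    have q4 := hpos 4; have q5 := hpos 5
    rw [Fin.prod_univ_six]
    show _ = Fm (n - (p 2 + p 3)) (p 0) * (Fm (p 2 + p 3) (p 2) * Fm (p 2 + p 3) (p 4))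
    unfold Fm
    have e1 : n - (p 2 + p 3) - p 0 = p 1 := by omega
    have e2 : p 2 + p 3 - p 2 = p 3 := by omega
    have e3 : p 2 + p 3 - p 4 = p 5 := by omega
    rw [e1, e2, e3]
    ring

lemma zeta (N : ℕ) : ∑ a ∈ Finset.Icc 1 N, (a:ℝ)^(-(9/7):ℝ) ≤ 9/2 := by
  rcases Nat.eq_zero_or_pos N with h | h
  · subst h; simp; norm_num
  · have := zeta_aux N h
    have h2 : (0:ℝ) ≤ (N:ℝ)^(-(2/7):ℝ) := Real.rpow_nonneg (Nat.cast_nonneg N) _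
    linarith

lemma cross (m k : ℕ) (hm : 0 < m) :
    ((k:ℝ))^(-3/7:ℝ) * ((m:ℝ)^(-3/7:ℝ) * (m:ℝ)^(-3/7:ℝ))
      ≤ (m:ℝ)^(-(9/7):ℝ) + ((k:ℝ))^(-(9/7):ℝ) := by
  have hmR : (0:ℝ) < (m:ℝ) := by exact_mod_cast hm
  have hm9 : (m:ℝ)^(-3/7:ℝ) * ((m:ℝ)^(-3/7:ℝ) * (m:ℝ)^(-3/7:ℝ)) = (m:ℝ)^(-(9/7):ℝ) := by
    rw [← Real.rpow_add hmR, ← Real.rpow_add hmR]; norm_num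
  rcases Nat.eq_zero_or_pos k with h0 | hk
  · subst h0
    simp only [Nat.cast_zero, Real.zero_rpow (by norm_num : (-3/7:ℝ) ≠ 0), zero_mul]
    positivity
  have hkR : (0:ℝ) < (k:ℝ) := by exact_mod_cast hk
  have hk9 : (k:ℝ)^(-3/7:ℝ) * ((k:ℝ)^(-3/7:ℝ) * (k:ℝ)^(-3/7:ℝ)) = (k:ℝ)^(-(9/7):ℝ) := by
    rw [← Real.rpow_add hkR, ← Real.rpow_add hkR]; norm_num
  have hmn : (0:ℝ) ≤ (m:ℝ)^(-3/7:ℝ) := Real.rpow_nonneg hmR.le _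
  have hkn : (0:ℝ) ≤ (k:ℝ)^(-3/7:ℝ) := Real.rpow_nonneg hkR.le _
  have hm9n : (0:ℝ) ≤ (m:ℝ)^(-(9/7):ℝ) := Real.rpow_nonneg hmR.le _
  have hk9n : (0:ℝ) ≤ (k:ℝ)^(-(9/7):ℝ) := Real.rpow_nonneg hkR.le _
  rcases le_total m k with h | h
  · have hle : ((k:ℝ))^(-3/7:ℝ) ≤ ((m:ℝ))^(-3/7:ℝ) :=
      Real.rpow_le_rpow_of_nonpos hmR (by exact_mod_cast h) (by norm_num)
    have t2 : ((k:ℝ))^(-3/7:ℝ) * ((m:ℝ)^(-3/7:ℝ) * (m:ℝ)^(-3/7:ℝ))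
        ≤ ((m:ℝ))^(-3/7:ℝ) * ((m:ℝ)^(-3/7:ℝ) * (m:ℝ)^(-3/7:ℝ)) :=
      mul_le_mul_of_nonneg_right hle (by positivity)
    rw [hm9] at t2
    linarith
  · have hle : ((m:ℝ))^(-3/7:ℝ) ≤ ((k:ℝ))^(-3/7:ℝ) :=
      Real.rpow_le_rpow_of_nonpos hkR (by exact_mod_cast h) (by norm_num)
    have t1 : (m:ℝ)^(-3/7:ℝ) * (m:ℝ)^(-3/7:ℝ) ≤ (k:ℝ)^(-3/7:ℝ) * (k:ℝ)^(-3/7:ℝ) :=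
      mul_le_mul hle hle (by positivity) (by positivity)
    have t2 : ((k:ℝ))^(-3/7:ℝ) * ((m:ℝ)^(-3/7:ℝ) * (m:ℝ)^(-3/7:ℝ))
        ≤ ((k:ℝ))^(-3/7:ℝ) * ((k:ℝ)^(-3/7:ℝ) * (k:ℝ)^(-3/7:ℝ)) :=
      mul_le_mul_of_nonneg_left t1 (by positivity)
    rw [hk9] at t2
    linarith

lemma sum2 (n : ℕ) (hn : 2 ≤ n) :
    ∑ m ∈ Finset.Icc 2 n, (((n-m:ℕ)):ℝ)^(-(9/7):ℝ) ≤ 9/2 := by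
  have e : ∑ m ∈ Finset.Icc 2 n, (((n-m:ℕ)):ℝ)^(-(9/7):ℝ)
      = ∑ k ∈ Finset.Icc 0 (n-2), ((k:ℕ):ℝ)^(-(9/7):ℝ) := by
    refine Finset.sum_nbij' (fun m => n - m) (fun k => n - k) ?_ ?_ ?_ ?_ (fun a ha => rfl) <;>
      simp only [Finset.mem_Icc] <;> intros <;> omega
  rw [e]
  have e2 : Finset.Icc 0 (n-2) = insert 0 (Finset.Icc 1 (n-2)) := by
    ext a; simp [Finset.mem_Icc, Finset.mem_insert]; omega
  rw [e2, Finset.sum_insert (by simp)]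
  rw [Nat.cast_zero, Real.zero_rpow (by norm_num : (-(9/7):ℝ) ≠ 0), zero_add]
  exact zeta (n-2)

lemma final_bound (n : ℕ) (hn : 2 ≤ n) :
    ∑ m ∈ Finset.Icc 2 n, Tm (n - m) * (Tm m * Tm m) ≤ 24696 := by
  have step : ∀ m ∈ Finset.Icc 2 n, Tm (n - m) * (Tm m * Tm m)
      ≤ 14^3 * ((m:ℝ)^(-(9/7):ℝ) + (((n-m:ℕ)):ℝ)^(-(9/7):ℝ)) := by
    intro m hm
    simp only [Finset.mem_Icc] at hm
    have h1 : Tm m * Tm m ≤ (14 * (m:ℝ)^(-3/7:ℝ)) * (14 * (m:ℝ)^(-3/7:ℝ)) :=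
      mul_le_mul (Tm_le m) (Tm_le m) (Tm_nonneg m) (by positivity)
    have h2 : Tm (n-m) * (Tm m * Tm m)
        ≤ (14 * (((n-m:ℕ)):ℝ)^(-3/7:ℝ)) * ((14 * (m:ℝ)^(-3/7:ℝ)) * (14 * (m:ℝ)^(-3/7:ℝ))) :=
      mul_le_mul (Tm_le _) h1 (mul_nonneg (Tm_nonneg m) (Tm_nonneg m)) (by positivity)
    have h3 := cross m (n-m) (by omega)
    calc Tm (n-m) * (Tm m * Tm m)
        ≤ (14 * (((n-m:ℕ)):ℝ)^(-3/7:ℝ)) * ((14 * (m:ℝ)^(-3/7:ℝ)) * (14 * (m:ℝ)^(-3/7:ℝ))) := h2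
      _ = 14^3 * ((((n-m:ℕ)):ℝ)^(-3/7:ℝ) * ((m:ℝ)^(-3/7:ℝ) * (m:ℝ)^(-3/7:ℝ))) := by ring
      _ ≤ 14^3 * ((m:ℝ)^(-(9/7):ℝ) + (((n-m:ℕ)):ℝ)^(-(9/7):ℝ)) := by nlinarith [h3]
  calc ∑ m ∈ Finset.Icc 2 n, Tm (n - m) * (Tm m * Tm m)
      ≤ ∑ m ∈ Finset.Icc 2 n, 14^3 * ((m:ℝ)^(-(9/7):ℝ) + (((n-m:ℕ)):ℝ)^(-(9/7):ℝ)) :=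
        Finset.sum_le_sum step
    _ = 14^3 * (∑ m ∈ Finset.Icc 2 n, (m:ℝ)^(-(9/7):ℝ)
          + ∑ m ∈ Finset.Icc 2 n, (((n-m:ℕ)):ℝ)^(-(9/7):ℝ)) := by
        rw [← Finset.sum_add_distrib, ← Finset.mul_sum]
    _ ≤ 14^3 * (9/2 + 9/2) := by
        have hs1 : ∑ m ∈ Finset.Icc 2 n, (m:ℝ)^(-(9/7):ℝ) ≤ 9/2 := by
          refine le_trans (Finset.sum_le_sum_of_subset_of_nonneg ?_
            (fun a _ _ => Real.rpow_nonneg (Nat.cast_nonneg a) _)) (zeta n)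
          intro a ha; simp only [Finset.mem_Icc] at *; omega
        have hs2 := sum2 n hn
        nlinarith
    _ = 24696 := by norm_num

theorem stmt9 :
    ∃ C : ℝ, 0 < C ∧ ∀ n : ℕ, 2 ≤ n →
      (∑' p : {p : Fin 6 → ℕ // (∀ i, 0 < p i) ∧ p 0 + p 1 + p 2 + p 3 = n ∧
          p 3 + p 2 = p 4 + p 5},
        ∏ i, ((p : Fin 6 → ℕ) i : ℝ) ^ (-5/7 : ℝ)) ≤ C := by
  refine ⟨24696, by norm_num, fun n hn => ?_⟩
  apply tsum_le_of_sum_le' (by norm_num)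
  intro u
  have hinj : ∀ x ∈ u, ∀ y ∈ u, (x : Fin 6 → ℕ) = (y : Fin 6 → ℕ) → x = y :=
    fun x _ y _ h => Subtype.ext h
  have himg : ∑ p ∈ u, ∏ i, (((p : Fin 6 → ℕ)) i : ℝ) ^ (-5/7 : ℝ)
      = ∑ q ∈ u.image Subtype.val, ∏ i, ((q i : ℝ)) ^ (-5/7 : ℝ) :=
    (Finset.sum_image (f := fun q => ∏ i, ((q i : ℝ)) ^ (-5/7 : ℝ)) hinj).symm
  rw [himg]
  have hsub : u.image Subtype.val ⊆ An n := by
    intro q hq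
    simp only [Finset.mem_image] at hq
    obtain ⟨⟨p, hp⟩, _, rfl⟩ := hq
    obtain ⟨hpos, h1, h2⟩ := hp
    simp only [An, Finset.mem_filter, Fintype.mem_piFinset, Finset.mem_range]
    refine ⟨?_, hpos, h1, h2⟩
    intro i
    have q0 := hpos 0; have q1 := hpos 1; have q2 := hpos 2; have q3 := hpos 3
    have q4 := hpos 4; have q5 := hpos 5
    fin_cases i
    · show p 0 < n + 1; omega
    · show p 1 < n + 1; omega
    · show p 2 < n + 1; omega
    · show p 3 < n + 1; omega
    · show p 4 < n + 1; omega
    · show p 5 < n + 1; omega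
  calc ∑ q ∈ u.image Subtype.val, ∏ i, ((q i : ℝ)) ^ (-5/7 : ℝ)
      ≤ ∑ q ∈ An n, ∏ i, ((q i : ℝ)) ^ (-5/7 : ℝ) := by
        refine Finset.sum_le_sum_of_subset_of_nonneg hsub fun q _ _ => ?_
        exact Finset.prod_nonneg fun i _ => Real.rpow_nonneg (Nat.cast_nonneg _) _
    _ = ∑ m ∈ Finset.Icc 2 n, Tm (n - m) * (Tm m * Tm m) := An_sum_eq n
    _ ≤ 24696 := final_bound n hn
end

section
/- There exists a constant C > 0 such that for every integer n ≥ 2, ∑ over 5-tuples of positive integers (x₁,...,x₅) with x₁+x₂+x₃+x₄ = n and x₄+x₃ = x₂+x₅ of ∏_{i=1}^{5} x_i^(-5/7) ≤ C. -/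
/-!
Solving the two equations for x₁ and x₄ leaves a triple sum over (x₂, x₅, x₃), summed from the
inside out. Each inner sum is a discrete convolution `∑_{b + b' = m} b^(-s) b'^(-t)`, bounded by
splitting according to which of b, b' is at least m/2: it is `O(m^(1-s-t))` when s, t < 1 and
`O(m^(-t))` when s > 1. With s = 5/7, the sum over x₃ is `O((x₂ + x₅)^(-3/7)) ≤ O(x₅^(-3/7))`,
which turns the weight of x₅ into the summable `x₅^(-8/7)`; the sum over x₅ is then
`O((n - 2x₂)^(-5/7))`, and after the substitution x₂ ↦ 2x₂ the sum over x₂ is again a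
convolution, `O(n^(-3/7))`.
-/

open Finset Real

section

variable {s t : ℝ}

lemma sub_one_rpow_add_mul_rpow_neg_le {x : ℝ} (hx : 1 ≤ x) (hs : 0 ≤ s) (hs1 : s ≤ 1) :
    (x - 1) ^ (1 - s) + (1 - s) * x ^ (-s) ≤ x ^ (1 - s) := by
  have hx0 : 0 < x := one_pos.trans_le hx
  have bernoulli : (1 + -x⁻¹) ^ (1 - s) ≤ 1 + (1 - s) * -x⁻¹ :=
    rpow_one_add_le_one_add_mul_self (by linarith [inv_le_one_of_one_le₀ hx]) (by linarith)
      (by linarith)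
  have hsplit : (x - 1) ^ (1 - s) = x ^ (1 - s) * (1 + -x⁻¹) ^ (1 - s) := by
    rw [← mul_rpow hx0.le (by linarith [inv_le_one_of_one_le₀ hx])]
    congr 1
    field_simp
    ring
  have hneg : x ^ (-s) = x ^ (1 - s) * x⁻¹ := by
    rw [show -s = (1 - s) - 1 by ring, rpow_sub_one hx0.ne', div_eq_mul_inv]
  rw [hsplit, hneg]
  nlinarith [rpow_nonneg hx0.le (1 - s)]

lemma sum_Icc_rpow_neg_le (hs : 0 ≤ s) (hs1 : s < 1) (m : ℕ) :
    ∑ k ∈ Icc 1 m, (k : ℝ) ^ (-s) ≤ (m : ℝ) ^ (1 - s) / (1 - s) := by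
  induction m with
  | zero => simp [zero_rpow (by linarith : 1 - s ≠ 0)]
  | succ j ih =>
    rw [sum_Icc_succ_top (by omega), le_div_iff₀ (by linarith)]
    rw [le_div_iff₀ (by linarith)] at ih
    have := sub_one_rpow_add_mul_rpow_neg_le (x := (j + 1 : ℕ)) (by simp) hs hs1.le
    push_cast at this ⊢
    simp only [add_sub_cancel_right] at this
    nlinarith

lemma rpow_neg_mul_rpow_neg_le {x y : ℝ} (hx : 0 < x) (hy : 0 < y) (hs : 0 ≤ s) (ht : 0 ≤ t) :
    x ^ (-s) * y ^ (-t) ≤ ((x + y) / 2) ^ (-s) * y ^ (-t) + ((x + y) / 2) ^ (-t) * x ^ (-s) := by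
  have hxy : 0 < (x + y) / 2 := by positivity
  rcases le_total y x with h | h
  · have : x ^ (-s) ≤ ((x + y) / 2) ^ (-s) :=
      rpow_le_rpow_of_nonpos hxy (by linarith) (by linarith)
    nlinarith [rpow_nonneg hy.le (-t), rpow_nonneg hx.le (-s), rpow_nonneg hxy.le (-t)]
  · have : y ^ (-t) ≤ ((x + y) / 2) ^ (-t) :=
      rpow_le_rpow_of_nonpos hxy (by linarith) (by linarith)
    nlinarith [rpow_nonneg hy.le (-t), rpow_nonneg hx.le (-s), rpow_nonneg hxy.le (-s)]

lemma sum_Ioo_reflect (f : ℕ → ℝ) (m : ℕ) : ∑ b ∈ Ioo 0 m, f (m - b) = ∑ b ∈ Ioo 0 m, f b :=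
  sum_nbij' (fun b => m - b) (fun b => m - b) (fun b hb => by simp only [mem_Ioo] at hb ⊢; omega)
    (fun b hb => by simp only [mem_Ioo] at hb ⊢; omega) (fun b hb => by simp only [mem_Ioo] at hb; omega)
    (fun b hb => by simp only [mem_Ioo] at hb; omega) (fun _ _ => rfl)

lemma sum_Ioo_rpow_neg_mul_rpow_neg_sub_le (hs : 0 ≤ s) (ht : 0 ≤ t) (m : ℕ) :
    ∑ b ∈ Ioo 0 m, (b : ℝ) ^ (-s) * ((m - b : ℕ) : ℝ) ^ (-t) ≤
      ((m : ℝ) / 2) ^ (-s) * ∑ k ∈ Icc 1 m, (k : ℝ) ^ (-t) +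
        ((m : ℝ) / 2) ^ (-t) * ∑ k ∈ Icc 1 m, (k : ℝ) ^ (-s) := by
  have hsub : Ioo 0 m ⊆ Icc 1 m := fun b hb => by simp only [mem_Ioo, mem_Icc] at hb ⊢; omega
  calc ∑ b ∈ Ioo 0 m, (b : ℝ) ^ (-s) * ((m - b : ℕ) : ℝ) ^ (-t)
      ≤ ∑ b ∈ Ioo 0 m, (((m : ℝ) / 2) ^ (-s) * ((m - b : ℕ) : ℝ) ^ (-t) +
          ((m : ℝ) / 2) ^ (-t) * (b : ℝ) ^ (-s)) := by
        refine sum_le_sum fun b hb => ?_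
        rw [mem_Ioo] at hb
        have := rpow_neg_mul_rpow_neg_le (x := b) (y := (m - b : ℕ)) (by simp [hb.1])
          (by simp [hb.2]) hs ht
        simpa only [Nat.cast_sub hb.2.le, add_sub_cancel] using this
    _ = ((m : ℝ) / 2) ^ (-s) * ∑ k ∈ Ioo 0 m, (k : ℝ) ^ (-t) +
          ((m : ℝ) / 2) ^ (-t) * ∑ k ∈ Ioo 0 m, (k : ℝ) ^ (-s) := by
        rw [sum_add_distrib, ← mul_sum, ← mul_sum, sum_Ioo_reflect (fun k => (k : ℝ) ^ (-t))]
    _ ≤ _ := by gcongr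

lemma div_two_rpow_neg {x : ℝ} (hx : 0 ≤ x) (s : ℝ) : (x / 2) ^ (-s) = 2 ^ s * x ^ (-s) := by
  rw [div_rpow hx zero_le_two, rpow_neg zero_le_two, div_inv_eq_mul, mul_comm]

lemma sum_Ioo_rpow_neg_mul_rpow_neg_sub_le_of_lt_one (hs : 0 ≤ s) (hs1 : s < 1) (ht : 0 ≤ t)
    (ht1 : t < 1) (m : ℕ) :
    ∑ b ∈ Ioo 0 m, (b : ℝ) ^ (-s) * ((m - b : ℕ) : ℝ) ^ (-t) ≤
      (2 ^ s / (1 - t) + 2 ^ t / (1 - s)) * (m : ℝ) ^ (1 - s - t) := by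
  rcases Nat.eq_zero_or_pos m with rfl | hm
  · simp only [Ioo_self, sum_empty]
    have : 0 < 1 - t := by linarith
    have : 0 < 1 - s := by linarith
    positivity
  have hm : (0 : ℝ) < m := by exact_mod_cast hm
  calc _ ≤ ((m : ℝ) / 2) ^ (-s) * ((m : ℝ) ^ (1 - t) / (1 - t)) +
        ((m : ℝ) / 2) ^ (-t) * ((m : ℝ) ^ (1 - s) / (1 - s)) := by
        refine (sum_Ioo_rpow_neg_mul_rpow_neg_sub_le hs ht m).trans ?_
        gcongr
        exacts [sum_Icc_rpow_neg_le ht ht1 m, sum_Icc_rpow_neg_le hs hs1 m]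
    _ = _ := by
        rw [div_two_rpow_neg hm.le, div_two_rpow_neg hm.le, mul_div_assoc', mul_div_assoc',
          mul_assoc, mul_assoc, ← rpow_add hm, ← rpow_add hm]
        ring_nf

lemma sum_Ioo_rpow_neg_mul_rpow_neg_sub_le_of_one_lt (hs : 1 < s) (ht : 0 ≤ t) (ht1 : t < 1)
    (m : ℕ) :
    ∑ b ∈ Ioo 0 m, (b : ℝ) ^ (-s) * ((m - b : ℕ) : ℝ) ^ (-t) ≤
      (2 ^ s / (1 - t) + 2 ^ t * ∑' k : ℕ, (k : ℝ) ^ (-s)) * (m : ℝ) ^ (-t) := by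
  rcases Nat.eq_zero_or_pos m with rfl | hm
  · simp only [Ioo_self, sum_empty]
    have : 0 < 1 - t := by linarith
    positivity
  have hm1 : (1 : ℝ) ≤ m := by exact_mod_cast hm
  have hm : (0 : ℝ) < m := by exact_mod_cast hm
  calc _ ≤ ((m : ℝ) / 2) ^ (-s) * ((m : ℝ) ^ (1 - t) / (1 - t)) +
        ((m : ℝ) / 2) ^ (-t) * ∑' k : ℕ, (k : ℝ) ^ (-s) := by
        refine (sum_Ioo_rpow_neg_mul_rpow_neg_sub_le (by linarith) ht m).trans ?_
        gcongr
        · exact sum_Icc_rpow_neg_le ht ht1 m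
        · exact (summable_nat_rpow.mpr (by linarith)).sum_le_tsum _ fun k _ => by positivity
    _ = 2 ^ s * (m : ℝ) ^ (-s + (1 - t)) / (1 - t) +
        2 ^ t * (m : ℝ) ^ (-t) * ∑' k : ℕ, (k : ℝ) ^ (-s) := by
        rw [div_two_rpow_neg hm.le, div_two_rpow_neg hm.le, mul_div_assoc', mul_assoc,
          ← rpow_add hm]
    _ ≤ 2 ^ s * (m : ℝ) ^ (-t) / (1 - t) + 2 ^ t * (m : ℝ) ^ (-t) * ∑' k : ℕ, (k : ℝ) ^ (-s) := by
        have : 0 < 1 - t := by linarith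
        gcongr
        linarith
    _ = _ := by ring

lemma sum_Ioo_half_rpow_neg_mul_rpow_neg_sub_two_mul_le (s : ℝ) (n : ℕ) :
    ∑ a ∈ Ioo 0 (n / 2), (a : ℝ) ^ (-s) * ((n - 2 * a : ℕ) : ℝ) ^ (-s) ≤
      2 ^ s * ∑ b ∈ Ioo 0 n, (b : ℝ) ^ (-s) * ((n - b : ℕ) : ℝ) ^ (-s) := by
  have hdouble : ∀ a : ℕ, (a : ℝ) ^ (-s) = 2 ^ s * ((2 * a : ℕ) : ℝ) ^ (-s) := by
    intro a
    rw [Nat.cast_mul, Nat.cast_two, mul_rpow zero_le_two (Nat.cast_nonneg a), ← mul_assoc,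
      rpow_neg zero_le_two, mul_inv_cancel₀ (by positivity), one_mul]
  have hmaps : (Ioo 0 (n / 2)).image (fun a : ℕ => 2 * a) ⊆ Ioo 0 n := by
    intro b hb
    simp only [mem_image, mem_Ioo] at hb ⊢
    omega
  calc _ = 2 ^ s * ∑ b ∈ (Ioo 0 (n / 2)).image (fun a : ℕ => 2 * a),
        (b : ℝ) ^ (-s) * ((n - b : ℕ) : ℝ) ^ (-s) := by
        rw [sum_image fun a _ b _ h => by simpa using h, mul_sum]
        exact sum_congr rfl fun a _ => by rw [hdouble a, mul_assoc]
    _ ≤ _ := by gcongr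

lemma rpow_neg_mul_sum_Ioo_rpow_neg_mul_rpow_neg_sub_le (hs : 1 / 2 ≤ s) (hs1 : s < 1) (a : ℕ)
    {c : ℕ} (hc : 0 < c) :
    (c : ℝ) ^ (-s) * ∑ b ∈ Ioo 0 (a + c), (b : ℝ) ^ (-s) * ((a + c - b : ℕ) : ℝ) ^ (-s) ≤
      (2 ^ s / (1 - s) + 2 ^ s / (1 - s)) * (c : ℝ) ^ (-(3 * s - 1)) := by
  have hc : (0 : ℝ) < c := by exact_mod_cast hc
  have : 0 < 1 - s := by linarith
  calc _ ≤ (c : ℝ) ^ (-s) * ((2 ^ s / (1 - s) + 2 ^ s / (1 - s)) *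
        ((a + c : ℕ) : ℝ) ^ (1 - s - s)) := by
        gcongr
        exact sum_Ioo_rpow_neg_mul_rpow_neg_sub_le_of_lt_one (by linarith) hs1 (by linarith) hs1 _
    _ ≤ (c : ℝ) ^ (-s) * ((2 ^ s / (1 - s) + 2 ^ s / (1 - s)) * (c : ℝ) ^ (1 - s - s)) := by
        gcongr _ * (_ * ?_)
        exact rpow_le_rpow_of_nonpos hc (by simp) (by linarith)
    _ = _ := by
        rw [mul_left_comm, ← rpow_add hc]
        ring_nf

end

-- Coordinates `(a, c, b) = (x₂, x₅, x₃)`, so that `x₁ = n - 2a - c` and `x₄ = a + c - b`;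
-- `a < n / 2` says `2a + 2 ≤ n`.
noncomputable def tripleSum (s : ℝ) (n : ℕ) : ℝ :=
  ∑ a ∈ Ioo 0 (n / 2), (a : ℝ) ^ (-s) * ∑ c ∈ Ioo 0 (n - 2 * a),
    ((n - 2 * a - c : ℕ) : ℝ) ^ (-s) * ((c : ℝ) ^ (-s) *
      ∑ b ∈ Ioo 0 (a + c), (b : ℝ) ^ (-s) * ((a + c - b : ℕ) : ℝ) ^ (-s))

lemma sum_prod_rpow_neg_le_tripleSum (s : ℝ) (n : ℕ)
    (u : Finset {p : Fin 5 → ℕ // (∀ i, 0 < p i) ∧ p 0 + p 1 + p 2 + p 3 = n ∧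
      p 3 + p 2 = p 1 + p 4}) :
    ∑ p ∈ u, ∏ i, ((p : Fin 5 → ℕ) i : ℝ) ^ (-s) ≤ tripleSum s n := by
  set G : (Σ _ : ℕ, Σ _ : ℕ, ℕ) → ℝ := fun x =>
    ((n - 2 * x.1 - x.2.1 : ℕ) : ℝ) ^ (-s) * (x.1 : ℝ) ^ (-s) * (x.2.2 : ℝ) ^ (-s) *
      ((x.1 + x.2.1 - x.2.2 : ℕ) : ℝ) ^ (-s) * (x.2.1 : ℝ) ^ (-s)
  set φ : {p : Fin 5 → ℕ // (∀ i, 0 < p i) ∧ p 0 + p 1 + p 2 + p 3 = n ∧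
      p 3 + p 2 = p 1 + p 4} → (Σ _ : ℕ, Σ _ : ℕ, ℕ) := fun p => ⟨p.1 1, p.1 4, p.1 2⟩
  have hG : ∀ p ∈ u, ∏ i, ((p : Fin 5 → ℕ) i : ℝ) ^ (-s) = G (φ p) := by
    rintro ⟨p, hpos, hsum, hbal⟩ -
    have h0 : p 0 = n - 2 * p 1 - p 4 := by omega
    have h3 : p 3 = p 1 + p 4 - p 2 := by omega
    simp only [Fin.prod_univ_five, G, φ, ← h0, ← h3]
  have hinj : Set.InjOn φ u := by
    rintro ⟨p, hp⟩ - ⟨q, hq⟩ - hpq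
    simp only [φ, Sigma.mk.injEq, heq_eq_eq] at hpq
    ext i
    fin_cases i <;> dsimp <;> omega
  have hmaps : u.image φ ⊆ (Ioo 0 (n / 2)).sigma fun a =>
      (Ioo 0 (n - 2 * a)).sigma fun c => Ioo 0 (a + c) := by
    simp only [subset_iff, mem_image, mem_sigma, mem_Ioo]
    rintro _ ⟨⟨p, hpos, hsum, hbal⟩, -, rfl⟩
    have := hpos 0; have := hpos 1; have := hpos 2; have := hpos 3; have := hpos 4
    simp only [φ]
    omega
  calc ∑ p ∈ u, ∏ i, ((p : Fin 5 → ℕ) i : ℝ) ^ (-s)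
      = ∑ x ∈ u.image φ, G x := by rw [sum_image hinj]; exact sum_congr rfl hG
    _ ≤ ∑ x ∈ (Ioo 0 (n / 2)).sigma (fun a =>
          (Ioo 0 (n - 2 * a)).sigma fun c => Ioo 0 (a + c)), G x :=
        sum_le_sum_of_subset_of_nonneg hmaps fun _ _ _ => by positivity
    _ = tripleSum s n := by
        simp only [sum_sigma, G, tripleSum, mul_sum]
        exact sum_congr rfl fun a _ => sum_congr rfl fun c _ => sum_congr rfl fun b _ => by ring

lemma tripleSum_le {s : ℝ} (hs : 2 / 3 < s) (hs1 : s < 1) (n : ℕ) :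
    tripleSum s n ≤
      (2 ^ s / (1 - s) + 2 ^ s / (1 - s)) *
        (2 ^ (3 * s - 1) / (1 - s) + 2 ^ s * ∑' k : ℕ, (k : ℝ) ^ (-(3 * s - 1))) *
          (2 ^ s * (2 ^ s / (1 - s) + 2 ^ s / (1 - s))) * (n : ℝ) ^ (1 - s - s) := by
  set K₁ := 2 ^ s / (1 - s) + 2 ^ s / (1 - s)
  set K₂ := 2 ^ (3 * s - 1) / (1 - s) + 2 ^ s * ∑' k : ℕ, (k : ℝ) ^ (-(3 * s - 1))
  have h1s : 0 < 1 - s := by linarith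
  calc tripleSum s n
      ≤ ∑ a ∈ Ioo 0 (n / 2), (a : ℝ) ^ (-s) * ∑ c ∈ Ioo 0 (n - 2 * a),
          ((n - 2 * a - c : ℕ) : ℝ) ^ (-s) * (K₁ * (c : ℝ) ^ (-(3 * s - 1))) :=
        sum_le_sum fun a _ => mul_le_mul_of_nonneg_left (sum_le_sum fun c hc =>
          mul_le_mul_of_nonneg_left (rpow_neg_mul_sum_Ioo_rpow_neg_mul_rpow_neg_sub_le
            (by linarith) hs1 a (mem_Ioo.mp hc).1) (by positivity)) (by positivity)
    _ = K₁ * ∑ a ∈ Ioo 0 (n / 2), (a : ℝ) ^ (-s) * ∑ c ∈ Ioo 0 (n - 2 * a),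
        (c : ℝ) ^ (-(3 * s - 1)) * ((n - 2 * a - c : ℕ) : ℝ) ^ (-s) := by
        simp only [mul_sum]
        exact sum_congr rfl fun a _ => sum_congr rfl fun c _ => by ring
    _ ≤ K₁ * ∑ a ∈ Ioo 0 (n / 2), (a : ℝ) ^ (-s) * (K₂ * ((n - 2 * a : ℕ) : ℝ) ^ (-s)) := by
        gcongr with a
        exact sum_Ioo_rpow_neg_mul_rpow_neg_sub_le_of_one_lt (by linarith) (by linarith) hs1 _
    _ = K₁ * K₂ * ∑ a ∈ Ioo 0 (n / 2), (a : ℝ) ^ (-s) * ((n - 2 * a : ℕ) : ℝ) ^ (-s) := by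
        simp only [mul_sum, mul_left_comm, mul_assoc]
    _ ≤ K₁ * K₂ * (2 ^ s * (K₁ * (n : ℝ) ^ (1 - s - s))) := by
        gcongr
        refine (sum_Ioo_half_rpow_neg_mul_rpow_neg_sub_two_mul_le s n).trans ?_
        gcongr
        exact sum_Ioo_rpow_neg_mul_rpow_neg_sub_le_of_lt_one (by linarith) hs1 (by linarith) hs1 n
    _ = _ := by ring

theorem exists_tsum_prod_rpow_neg_le {s : ℝ} (hs : 2 / 3 < s) (hs1 : s < 1) :
    ∃ C : ℝ, 0 < C ∧ ∀ n : ℕ, 1 ≤ n →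
      (∑' p : {p : Fin 5 → ℕ // (∀ i, 0 < p i) ∧ p 0 + p 1 + p 2 + p 3 = n ∧
          p 3 + p 2 = p 1 + p 4},
        ∏ i, ((p : Fin 5 → ℕ) i : ℝ) ^ (-s)) ≤ C := by
  have h1s : 0 < 1 - s := by linarith
  refine ⟨(2 ^ s / (1 - s) + 2 ^ s / (1 - s)) *
      (2 ^ (3 * s - 1) / (1 - s) + 2 ^ s * ∑' k : ℕ, (k : ℝ) ^ (-(3 * s - 1))) *
        (2 ^ s * (2 ^ s / (1 - s) + 2 ^ s / (1 - s))), by positivity, fun n hn => ?_⟩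
  refine Real.tsum_le_of_sum_le (fun p => prod_nonneg fun i _ => by positivity) fun u =>
    (sum_prod_rpow_neg_le_tripleSum s n u).trans ((tripleSum_le hs hs1 n).trans ?_)
  exact mul_le_of_le_one_right (by positivity)
    (rpow_le_one_of_one_le_of_nonpos (by exact_mod_cast hn) (by linarith))

theorem stmt11 :
    ∃ C : ℝ, 0 < C ∧ ∀ n : ℕ, 2 ≤ n →
      (∑' p : {p : Fin 5 → ℕ // (∀ i, 0 < p i) ∧ p 0 + p 1 + p 2 + p 3 = n ∧
          p 3 + p 2 = p 1 + p 4},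
        ∏ i, ((p : Fin 5 → ℕ) i : ℝ) ^ (-5/7 : ℝ)) ≤ C := by
  obtain ⟨C, hC, hbound⟩ := exists_tsum_prod_rpow_neg_le (s := 5 / 7) (by norm_num) (by norm_num)
  exact ⟨C, hC, fun n hn => by simpa only [neg_div] using hbound n (by omega)⟩
end

section
/- There exists a constant C > 0 such that for every integer n ≥ 2, ∑ over 5-tuples of positive integers (x₁,...,x₅) with x₁+x₂+x₃+x₄ = n and x₄+x₅ = x₂+x₃ of ∏_{i=1}^{5} x_i^(-5/7) ≤ C. -/
open Finset

noncomputable def rr (k : ℕ) : ℝ := (k : ℝ) ^ (-5/7 : ℝ)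

lemma rr_nonneg (k : ℕ) : 0 ≤ rr k := Real.rpow_nonneg (Nat.cast_nonneg k) _

lemma rr_zero : rr 0 = 0 := by
  simp only [rr, Nat.cast_zero]
  exact Real.zero_rpow (by norm_num)

lemma cast_rpow_neg_le_one (a : ℕ) {y : ℝ} (hy : y < 0) : (a : ℝ) ^ y ≤ 1 := by
  rcases Nat.eq_zero_or_pos a with h | h
  · subst h
    rw [Nat.cast_zero, Real.zero_rpow hy.ne]
    norm_num
  · exact Real.rpow_le_one_of_one_le_of_nonpos (by exact_mod_cast h) hy.le

lemma rr_half {c m : ℕ} (hm : 0 < m) (h : m ≤ 2 * c) : rr c ≤ 2 * rr m := by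
  have hc2 : (0:ℝ) < (m:ℝ)/2 := by positivity
  have hle : (m:ℝ)/2 ≤ (c:ℝ) := by
    have : (m:ℝ) ≤ 2*(c:ℝ) := by exact_mod_cast h
    linarith
  have h1 : rr c ≤ ((m:ℝ)/2) ^ (-5/7:ℝ) :=
    Real.rpow_le_rpow_of_nonpos hc2 hle (by norm_num)
  have h2 : ((m:ℝ)/2) ^ (-5/7:ℝ) = (m:ℝ) ^ (-5/7:ℝ) * (2:ℝ) ^ (5/7:ℝ) := by
    rw [Real.div_rpow (by positivity) (by norm_num)]
    rw [show (-5/7 : ℝ) = -(5/7) by norm_num, Real.rpow_neg (by norm_num : (0:ℝ) ≤ 2)]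
    field_simp
  have h3 : (2:ℝ) ^ (5/7:ℝ) ≤ 2 := by
    calc (2:ℝ) ^ (5/7:ℝ) ≤ (2:ℝ) ^ (1:ℝ) :=
        Real.rpow_le_rpow_of_exponent_le one_le_two (by norm_num)
    _ = 2 := Real.rpow_one 2
  have h4 : (m:ℝ) ^ (-5/7:ℝ) * (2:ℝ) ^ (5/7:ℝ) ≤ (m:ℝ) ^ (-5/7:ℝ) * 2 :=
    mul_le_mul_of_nonneg_left h3 (by positivity)
  calc rr c ≤ (m:ℝ) ^ (-5/7:ℝ) * (2:ℝ) ^ (5/7:ℝ) := h2 ▸ h1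
  _ ≤ (m:ℝ) ^ (-5/7:ℝ) * 2 := h4
  _ = 2 * rr m := by rw [rr]; ring

lemma term_le_integral (i : ℕ) :
    rr (i+1) ≤ ∫ x in (i:ℝ)..((i:ℝ)+1), x ^ (-5/7:ℝ) := by
  rcases Nat.eq_zero_or_pos i with h | h
  · subst h
    rw [integral_rpow (Or.inl (by norm_num))]
    norm_num [rr, Real.zero_rpow]
  · have hmono : ∀ x ∈ Set.Icc (i:ℝ) ((i:ℝ)+1), rr (i+1) ≤ x ^ (-5/7:ℝ) := by
      intro x hx
      have hx0 : (0:ℝ) < x := lt_of_lt_of_le (by exact_mod_cast h) hx.1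
      refine Real.rpow_le_rpow_of_nonpos hx0 ?_ (by norm_num)
      push_cast
      exact hx.2
    have hint := intervalIntegral.integral_mono_on (f := fun _ => rr (i+1))
      (g := fun x => x ^ (-5/7:ℝ)) (by linarith : (i:ℝ) ≤ (i:ℝ)+1)
      intervalIntegrable_const
      (intervalIntegral.intervalIntegrable_rpow' (by norm_num))
      hmono
    simpa using hint


lemma sum_rr_le (K : ℕ) : ∑ k ∈ range (K+1), rr k ≤ 7/2 * (K:ℝ) ^ (2/7 : ℝ) := by
  have h1 : ∑ k ∈ range (K+1), rr k = ∑ i ∈ range K, rr (i+1) := by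
    rw [Finset.sum_range_succ', rr_zero, add_zero]
  rw [h1]
  have h2 : ∑ i ∈ range K, rr (i+1) ≤
      ∑ i ∈ range K, ∫ x in (i:ℝ)..((i:ℝ)+1), x ^ (-5/7:ℝ) :=
    Finset.sum_le_sum (fun i _ => term_le_integral i)
  have h3 : ∑ i ∈ range K, ∫ x in (i:ℝ)..((i:ℝ)+1), x ^ (-5/7:ℝ)
      = ∫ x in (0:ℝ)..(K:ℝ), x ^ (-5/7:ℝ) := by
    have := intervalIntegral.sum_integral_adjacent_intervals
      (a := fun i : ℕ => (i:ℝ)) (n := K) (f := fun x => x ^ (-5/7:ℝ))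
      (μ := MeasureTheory.volume)
      (fun k _ => intervalIntegral.intervalIntegrable_rpow' (by norm_num))
    push_cast at this
    convert this using 1
  have h4 : ∫ x in (0:ℝ)..(K:ℝ), x ^ (-5/7:ℝ) = 7/2 * (K:ℝ) ^ (2/7:ℝ) := by
    rw [integral_rpow (Or.inl (by norm_num))]
    norm_num [Real.zero_rpow]
    ring
  linarith [h3 ▸ h2, h4 ▸ (le_refl (∫ x in (0:ℝ)..(K:ℝ), x ^ (-5/7:ℝ)))]

lemma sum_rr_sub_le (m : ℕ) : ∑ a ∈ range m, rr (m - a) ≤ 7/2 * (m:ℝ) ^ (2/7:ℝ) := by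
  have h : ∑ a ∈ range m, rr (m - a) = ∑ a ∈ range m, rr (a+1) := by
    rw [← Finset.sum_range_reflect]
    refine Finset.sum_congr rfl (fun j hj => ?_)
    rw [mem_range] at hj
    congr 1
    omega
  have h2 : ∑ a ∈ range m, rr (a+1) = ∑ k ∈ range (m+1), rr k := by
    rw [Finset.sum_range_succ', rr_zero, add_zero]
  rw [h, h2]
  exact sum_rr_le m

lemma sum_rr_range (m : ℕ) : ∑ a ∈ range m, rr a ≤ 7/2 * (m:ℝ) ^ (2/7:ℝ) := by
  calc ∑ a ∈ range m, rr a ≤ ∑ a ∈ range (m+1), rr a :=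
        Finset.sum_le_sum_of_subset_of_nonneg
          (Finset.range_subset_range.2 (Nat.le_succ m)) (fun i _ _ => rr_nonneg i)
  _ ≤ 7/2 * (m:ℝ) ^ (2/7:ℝ) := sum_rr_le m

lemma conv_bound (m : ℕ) : ∑ a ∈ range m, rr a * rr (m - a) ≤ 14 * (m:ℝ) ^ (-3/7:ℝ) := by
  rcases Nat.eq_zero_or_pos m with hm | hm
  · subst hm
    simp [Real.zero_rpow]
  have hrec : (m:ℝ) ^ (2/7:ℝ) * ((m:ℝ) ^ (-5/7:ℝ)) = (m:ℝ) ^ (-3/7:ℝ) := by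
    rw [← Real.rpow_add (by exact_mod_cast hm)]
    norm_num
  rw [← Finset.sum_filter_add_sum_filter_not (range m) (fun a => 2*a ≤ m)]
  have part1 : ∑ a ∈ (range m).filter (fun a => 2*a ≤ m), rr a * rr (m - a)
      ≤ 7 * (m:ℝ) ^ (-3/7:ℝ) := by
    have hterm : ∀ a ∈ (range m).filter (fun a => 2*a ≤ m),
        rr a * rr (m - a) ≤ rr a * (2 * rr m) := by
      intro a ha
      rw [Finset.mem_filter, Finset.mem_range] at ha
      exact mul_le_mul_of_nonneg_left (rr_half hm (by omega)) (rr_nonneg a)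
    calc ∑ a ∈ (range m).filter (fun a => 2*a ≤ m), rr a * rr (m - a)
        ≤ ∑ a ∈ (range m).filter (fun a => 2*a ≤ m), rr a * (2 * rr m) :=
          Finset.sum_le_sum hterm
    _ = (∑ a ∈ (range m).filter (fun a => 2*a ≤ m), rr a) * (2 * rr m) := by
          rw [Finset.sum_mul]
    _ ≤ (∑ a ∈ range m, rr a) * (2 * rr m) := by
          refine mul_le_mul_of_nonneg_right ?_ (by have := rr_nonneg m; linarith)
          exact Finset.sum_le_sum_of_subset_of_nonneg (Finset.filter_subset _ _)
            (fun i _ _ => rr_nonneg i)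
    _ ≤ (7/2 * (m:ℝ) ^ (2/7:ℝ)) * (2 * rr m) := by
          refine mul_le_mul_of_nonneg_right (sum_rr_range m) ?_
          have := rr_nonneg m; linarith
    _ = 7 * ((m:ℝ) ^ (2/7:ℝ) * ((m:ℝ) ^ (-5/7:ℝ))) := by rw [rr]; ring
    _ = 7 * (m:ℝ) ^ (-3/7:ℝ) := by rw [hrec]
  have part2 : ∑ a ∈ (range m).filter (fun a => ¬ 2*a ≤ m), rr a * rr (m - a)
      ≤ 7 * (m:ℝ) ^ (-3/7:ℝ) := by
    have hterm : ∀ a ∈ (range m).filter (fun a => ¬ 2*a ≤ m),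
        rr a * rr (m - a) ≤ (2 * rr m) * rr (m - a) := by
      intro a ha
      rw [Finset.mem_filter, Finset.mem_range] at ha
      exact mul_le_mul_of_nonneg_right (rr_half hm (by omega)) (rr_nonneg _)
    calc ∑ a ∈ (range m).filter (fun a => ¬ 2*a ≤ m), rr a * rr (m - a)
        ≤ ∑ a ∈ (range m).filter (fun a => ¬ 2*a ≤ m), (2 * rr m) * rr (m - a) :=
          Finset.sum_le_sum hterm
    _ = (2 * rr m) * ∑ a ∈ (range m).filter (fun a => ¬ 2*a ≤ m), rr (m - a) := by
          rw [Finset.mul_sum]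
    _ ≤ (2 * rr m) * ∑ a ∈ range m, rr (m - a) := by
          refine mul_le_mul_of_nonneg_left ?_ (by have := rr_nonneg m; linarith)
          exact Finset.sum_le_sum_of_subset_of_nonneg (Finset.filter_subset _ _)
            (fun i _ _ => rr_nonneg _)
    _ ≤ (2 * rr m) * (7/2 * (m:ℝ) ^ (2/7:ℝ)) := by
          refine mul_le_mul_of_nonneg_left (sum_rr_sub_le m) ?_
          have := rr_nonneg m; linarith
    _ = 7 * ((m:ℝ) ^ (2/7:ℝ) * ((m:ℝ) ^ (-5/7:ℝ))) := by rw [rr]; ring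
    _ = 7 * (m:ℝ) ^ (-3/7:ℝ) := by rw [hrec]
  linarith


noncomputable def Gfun (n : ℕ) (q : ℕ × (ℕ × (ℕ × ℕ))) : ℝ :=
  if q.1 + 2*q.2.1 + q.2.2.1 = n ∧ 0 < q.2.2.2 ∧ q.2.2.2 < q.2.1 + q.2.2.1 then
    rr q.1 * rr q.2.2.2 * rr (q.2.1 + q.2.2.1 - q.2.2.2) * rr q.2.1 * rr q.2.2.1
  else 0

lemma Gfun_nonneg (n : ℕ) (q : ℕ × (ℕ × (ℕ × ℕ))) : 0 ≤ Gfun n q := by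
  unfold Gfun
  split_ifs
  · have := rr_nonneg q.1; have := rr_nonneg q.2.2.2
    have := rr_nonneg (q.2.1 + q.2.2.1 - q.2.2.2)
    have := rr_nonneg q.2.1; have := rr_nonneg q.2.2.1
    positivity
  · exact le_refl 0

lemma inner_x2 (n x1 x4 x5 : ℕ) :
    ∑ x2 ∈ range (n+1), Gfun n (x1, (x4, (x5, x2)))
      ≤ (if x1 + 2*x4 + x5 = n then rr x1 * rr x4 else 0) * (14 * (x5:ℝ) ^ (-8/7:ℝ)) := by
  have hR0 : (0:ℝ) ≤ (if x1 + 2*x4 + x5 = n then rr x1 * rr x4 else 0) := by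
    split_ifs
    · exact mul_nonneg (rr_nonneg _) (rr_nonneg _)
    · exact le_refl 0
  rcases Nat.eq_zero_or_pos x5 with h5 | h5
  · subst h5
    have hz : ∀ x2 ∈ range (n+1), Gfun n (x1, (x4, (0, x2))) = 0 := by
      intro x2 _
      unfold Gfun
      split_ifs with h
      · simp [rr_zero]
      · rfl
    rw [Finset.sum_congr rfl hz, Finset.sum_const_zero]
    positivity
  by_cases hc : x1 + 2*x4 + x5 = n
  · rw [if_pos hc]
    have hstep : ∀ x2 ∈ range (n+1), Gfun n (x1, (x4, (x5, x2)))
        = (rr x1 * rr x4 * rr x5) *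
          (if 0 < x2 ∧ x2 < x4 + x5 then rr x2 * rr (x4 + x5 - x2) else 0) := by
      intro x2 _
      unfold Gfun
      simp only [hc, true_and]
      split_ifs with h
      · ring
      · rw [mul_zero]
    rw [Finset.sum_congr rfl hstep, ← Finset.mul_sum]
    have hsum : ∑ x2 ∈ range (n+1),
        (if 0 < x2 ∧ x2 < x4 + x5 then rr x2 * rr (x4 + x5 - x2) else 0)
        ≤ 14 * ((x4+x5:ℕ):ℝ) ^ (-3/7:ℝ) := by
      rw [← Finset.sum_filter]
      calc ∑ x2 ∈ (range (n+1)).filter (fun x2 => 0 < x2 ∧ x2 < x4 + x5),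
            rr x2 * rr (x4 + x5 - x2)
          ≤ ∑ x2 ∈ range (x4+x5), rr x2 * rr (x4 + x5 - x2) := by
            refine Finset.sum_le_sum_of_subset_of_nonneg ?_
              (fun i _ _ => mul_nonneg (rr_nonneg _) (rr_nonneg _))
            intro x hx
            rw [Finset.mem_filter, Finset.mem_range] at hx
            rw [Finset.mem_range]
            exact hx.2.2
      _ ≤ 14 * ((x4+x5:ℕ):ℝ) ^ (-3/7:ℝ) := conv_bound (x4+x5)
    have hmono : ((x4+x5:ℕ):ℝ) ^ (-3/7:ℝ) ≤ (x5:ℝ) ^ (-3/7:ℝ) := by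
      refine Real.rpow_le_rpow_of_nonpos (by exact_mod_cast h5) ?_ (by norm_num)
      exact_mod_cast Nat.le_add_left x5 x4
    have hx58 : (x5:ℝ) ^ (-5/7:ℝ) * (x5:ℝ) ^ (-3/7:ℝ) = (x5:ℝ) ^ (-8/7:ℝ) := by
      rw [← Real.rpow_add (by exact_mod_cast h5)]
      norm_num
    have hnn : 0 ≤ rr x1 * rr x4 * rr x5 :=
      mul_nonneg (mul_nonneg (rr_nonneg _) (rr_nonneg _)) (rr_nonneg _)
    calc (rr x1 * rr x4 * rr x5) * ∑ x2 ∈ range (n+1),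
          (if 0 < x2 ∧ x2 < x4 + x5 then rr x2 * rr (x4 + x5 - x2) else 0)
        ≤ (rr x1 * rr x4 * rr x5) * (14 * ((x4+x5:ℕ):ℝ) ^ (-3/7:ℝ)) :=
          mul_le_mul_of_nonneg_left hsum hnn
    _ ≤ (rr x1 * rr x4 * rr x5) * (14 * (x5:ℝ) ^ (-3/7:ℝ)) := by
        refine mul_le_mul_of_nonneg_left ?_ hnn
        linarith
    _ = rr x1 * rr x4 * (14 * ((x5:ℝ) ^ (-5/7:ℝ) * (x5:ℝ) ^ (-3/7:ℝ))) := by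
        rw [show rr x5 = (x5:ℝ) ^ (-5/7:ℝ) from rfl]; ring
    _ = rr x1 * rr x4 * (14 * (x5:ℝ) ^ (-8/7:ℝ)) := by rw [hx58]
  · rw [if_neg hc, zero_mul]
    have hz : ∀ x2 ∈ range (n+1), Gfun n (x1, (x4, (x5, x2))) = 0 := by
      intro x2 _
      unfold Gfun
      rw [if_neg]
      intro h
      exact hc h.1
    rw [Finset.sum_congr rfl hz, Finset.sum_const_zero]

noncomputable def C8 : ℝ := ∑' k : ℕ, (k:ℝ) ^ (-8/7 : ℝ)

lemma C8_nonneg : 0 ≤ C8 :=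
  tsum_nonneg (fun k => Real.rpow_nonneg (Nat.cast_nonneg k) _)

lemma sum8_le (s : Finset ℕ) : ∑ k ∈ s, (k:ℝ) ^ (-8/7:ℝ) ≤ C8 :=
  Summable.sum_le_tsum s (fun k _ => Real.rpow_nonneg (Nat.cast_nonneg k) _)
    (Real.summable_nat_rpow.2 (by norm_num))

lemma inner_x1x4 (n x5 : ℕ) :
    ∑ x1 ∈ range (n+1), ∑ x4 ∈ range (n+1),
      (if x1 + 2*x4 + x5 = n then rr x1 * rr x4 else 0) ≤ 28 := by
  set N := n - x5 with hN
  set W := ((range (n+1)) ×ˢ (range (n+1))).filter (fun q => q.1 + 2*q.2 + x5 = n) with hW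
  have h1 : ∑ x1 ∈ range (n+1), ∑ x4 ∈ range (n+1),
      (if x1 + 2*x4 + x5 = n then rr x1 * rr x4 else 0)
      = ∑ q ∈ W, rr q.1 * rr q.2 := by
    rw [hW, Finset.sum_filter, Finset.sum_product]
  rw [h1]
  have h2 : ∀ q ∈ W, rr q.1 * rr q.2 ≤ 2 * (rr q.1 * rr (N - q.1)) := by
    intro q hq
    rw [hW, Finset.mem_filter] at hq
    have hcond := hq.2
    have hNq : N - q.1 = 2 * q.2 := by omega
    rcases Nat.eq_zero_or_pos q.2 with h | h
    · rw [h, rr_zero, mul_zero, hNq, h, Nat.mul_zero, rr_zero, mul_zero, mul_zero]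
    · have := rr_half (c := q.2) (m := 2*q.2) (by omega) (le_refl _)
      rw [← hNq] at this
      calc rr q.1 * rr q.2 ≤ rr q.1 * (2 * rr (N - q.1)) :=
            mul_le_mul_of_nonneg_left this (rr_nonneg _)
      _ = 2 * (rr q.1 * rr (N - q.1)) := by ring
  have hinj : ∀ x ∈ W, ∀ y ∈ W, x.1 = y.1 → x = y := by
    intro x hx y hy hxy
    rw [hW, Finset.mem_filter] at hx hy
    have : x.2 = y.2 := by omega
    exact Prod.ext hxy this
  calc ∑ q ∈ W, rr q.1 * rr q.2 ≤ ∑ q ∈ W, 2 * (rr q.1 * rr (N - q.1)) :=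
        Finset.sum_le_sum h2
  _ = ∑ a ∈ W.image Prod.fst, 2 * (rr a * rr (N - a)) := (Finset.sum_image (f := fun a => 2 * (rr a * rr (N - a))) (g := Prod.fst) hinj).symm
  _ ≤ ∑ a ∈ range (N+1), 2 * (rr a * rr (N - a)) := by
      refine Finset.sum_le_sum_of_subset_of_nonneg ?_
        (fun i _ _ => by have := rr_nonneg i; have := rr_nonneg (N - i); positivity)
      intro a ha
      rw [Finset.mem_image] at ha
      obtain ⟨q, hq, rfl⟩ := ha
      rw [hW, Finset.mem_filter] at hq
      rw [Finset.mem_range]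
      omega
  _ = 2 * ∑ a ∈ range (N+1), rr a * rr (N - a) := by rw [Finset.mul_sum]
  _ = 2 * ∑ a ∈ range N, rr a * rr (N - a) := by
      rw [Finset.sum_range_succ, Nat.sub_self, rr_zero, mul_zero, add_zero]
  _ ≤ 2 * (14 * (N:ℝ) ^ (-3/7:ℝ)) := by
      have := conv_bound N; linarith
  _ ≤ 28 := by
      have h1 := cast_rpow_neg_le_one N (show (-3/7:ℝ) < 0 by norm_num)
      have h0 : (0:ℝ) ≤ (N:ℝ) ^ (-3/7:ℝ) := Real.rpow_nonneg (Nat.cast_nonneg N) _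
      linarith

lemma box_bound (n : ℕ) :
    ∑ q ∈ range (n+1) ×ˢ (range (n+1) ×ˢ (range (n+1) ×ˢ range (n+1))), Gfun n q
      ≤ 392 * C8 := by
  have e1 : ∑ q ∈ range (n+1) ×ˢ (range (n+1) ×ˢ (range (n+1) ×ˢ range (n+1))), Gfun n q
      = ∑ x1 ∈ range (n+1), ∑ x4 ∈ range (n+1), ∑ x5 ∈ range (n+1), ∑ x2 ∈ range (n+1),
          Gfun n (x1, (x4, (x5, x2))) := by
    rw [Finset.sum_product]
    refine Finset.sum_congr rfl (fun x1 _ => ?_)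
    rw [Finset.sum_product]
    refine Finset.sum_congr rfl (fun x4 _ => ?_)
    rw [Finset.sum_product]
  rw [e1]
  have e2 : ∑ x1 ∈ range (n+1), ∑ x4 ∈ range (n+1), ∑ x5 ∈ range (n+1), ∑ x2 ∈ range (n+1),
        Gfun n (x1, (x4, (x5, x2)))
      ≤ ∑ x1 ∈ range (n+1), ∑ x4 ∈ range (n+1), ∑ x5 ∈ range (n+1),
          (if x1 + 2*x4 + x5 = n then rr x1 * rr x4 else 0) * (14 * (x5:ℝ) ^ (-8/7:ℝ)) := by
    refine Finset.sum_le_sum (fun x1 _ => ?_)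
    refine Finset.sum_le_sum (fun x4 _ => ?_)
    exact Finset.sum_le_sum (fun x5 _ => inner_x2 n x1 x4 x5)
  refine le_trans e2 ?_
  have e3 : ∑ x1 ∈ range (n+1), ∑ x4 ∈ range (n+1), ∑ x5 ∈ range (n+1),
        (if x1 + 2*x4 + x5 = n then rr x1 * rr x4 else 0) * (14 * (x5:ℝ) ^ (-8/7:ℝ))
      = ∑ x5 ∈ range (n+1),
          (∑ x1 ∈ range (n+1), ∑ x4 ∈ range (n+1),
            (if x1 + 2*x4 + x5 = n then rr x1 * rr x4 else 0)) * (14 * (x5:ℝ) ^ (-8/7:ℝ)) := by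
    rw [show (∑ x1 ∈ range (n+1), ∑ x4 ∈ range (n+1), ∑ x5 ∈ range (n+1),
        (if x1 + 2*x4 + x5 = n then rr x1 * rr x4 else 0) * (14 * (x5:ℝ) ^ (-8/7:ℝ)))
      = ∑ x1 ∈ range (n+1), ∑ x5 ∈ range (n+1), ∑ x4 ∈ range (n+1),
        (if x1 + 2*x4 + x5 = n then rr x1 * rr x4 else 0) * (14 * (x5:ℝ) ^ (-8/7:ℝ))
      from Finset.sum_congr rfl (fun x1 _ => Finset.sum_comm)]
    rw [Finset.sum_comm]
    refine Finset.sum_congr rfl (fun x5 _ => ?_)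
    rw [Finset.sum_mul]
    refine Finset.sum_congr rfl (fun x1 _ => ?_)
    rw [Finset.sum_mul]
  rw [e3]
  have e4 : ∑ x5 ∈ range (n+1),
        (∑ x1 ∈ range (n+1), ∑ x4 ∈ range (n+1),
          (if x1 + 2*x4 + x5 = n then rr x1 * rr x4 else 0)) * (14 * (x5:ℝ) ^ (-8/7:ℝ))
      ≤ ∑ x5 ∈ range (n+1), 28 * (14 * (x5:ℝ) ^ (-8/7:ℝ)) := by
    refine Finset.sum_le_sum (fun x5 _ => ?_)
    refine mul_le_mul_of_nonneg_right (inner_x1x4 n x5) ?_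
    have : (0:ℝ) ≤ (x5:ℝ) ^ (-8/7:ℝ) := Real.rpow_nonneg (Nat.cast_nonneg x5) _
    linarith
  refine le_trans e4 ?_
  have e5 : ∑ x5 ∈ range (n+1), 28 * (14 * (x5:ℝ) ^ (-8/7:ℝ))
      = 392 * ∑ x5 ∈ range (n+1), (x5:ℝ) ^ (-8/7:ℝ) := by
    rw [Finset.mul_sum]
    exact Finset.sum_congr rfl (fun x5 _ => by ring)
  rw [e5]
  have := sum8_le (range (n+1))
  linarith

def ep (n : ℕ)
    (p : {p : Fin 5 → ℕ // (∀ i, 0 < p i) ∧ p 0 + p 1 + p 2 + p 3 = n ∧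
        p 3 + p 4 = p 1 + p 2}) : ℕ × (ℕ × (ℕ × ℕ)) :=
  (p.1 0, (p.1 3, (p.1 4, p.1 1)))

theorem stmt12 :
    ∃ C : ℝ, 0 < C ∧ ∀ n : ℕ, 2 ≤ n →
      (∑' p : {p : Fin 5 → ℕ // (∀ i, 0 < p i) ∧ p 0 + p 1 + p 2 + p 3 = n ∧
          p 3 + p 4 = p 1 + p 2},
        ∏ i, ((p : Fin 5 → ℕ) i : ℝ) ^ (-5/7 : ℝ)) ≤ C := by
  refine ⟨392 * C8 + 1, by have := C8_nonneg; linarith, ?_⟩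
  intro n _
  refine tsum_le_of_sum_le' (by have := C8_nonneg; linarith) ?_
  intro s
  have hfacts : ∀ p : {p : Fin 5 → ℕ // (∀ i, 0 < p i) ∧ p 0 + p 1 + p 2 + p 3 = n ∧
      p 3 + p 4 = p 1 + p 2}, 0 < p.1 0 ∧ 0 < p.1 1 ∧ 0 < p.1 2 ∧ 0 < p.1 3 ∧ 0 < p.1 4 ∧
      p.1 0 + p.1 1 + p.1 2 + p.1 3 = n ∧ p.1 3 + p.1 4 = p.1 1 + p.1 2 :=
    fun p => ⟨p.2.1 0, p.2.1 1, p.2.1 2, p.2.1 3, p.2.1 4, p.2.2.1, p.2.2.2⟩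
  have hval : ∀ p : {p : Fin 5 → ℕ // (∀ i, 0 < p i) ∧ p 0 + p 1 + p 2 + p 3 = n ∧
      p 3 + p 4 = p 1 + p 2},
      (∏ i, ((p : Fin 5 → ℕ) i : ℝ) ^ (-5/7 : ℝ)) = Gfun n (ep n p) := by
    intro p
    obtain ⟨h0, h1, h2, h3, h4, hs, he⟩ := hfacts p
    have hcond : p.1 0 + 2 * p.1 3 + p.1 4 = n ∧ 0 < p.1 1 ∧ p.1 1 < p.1 3 + p.1 4 := by
      omega
    have hsub : p.1 3 + p.1 4 - p.1 1 = p.1 2 := by omega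
    show _ = Gfun n (p.1 0, (p.1 3, (p.1 4, p.1 1)))
    unfold Gfun
    rw [if_pos hcond]
    simp only
    rw [hsub, Fin.prod_univ_five]
    rfl
  have hmem : ∀ p : {p : Fin 5 → ℕ // (∀ i, 0 < p i) ∧ p 0 + p 1 + p 2 + p 3 = n ∧
      p 3 + p 4 = p 1 + p 2},
      ep n p ∈ range (n+1) ×ˢ (range (n+1) ×ˢ (range (n+1) ×ˢ range (n+1))) := by
    intro p
    obtain ⟨h0, h1, h2, h3, h4, hs, he⟩ := hfacts p
    simp only [ep, Finset.mem_product, Finset.mem_range]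
    refine ⟨by omega, by omega, by omega, by omega⟩
  have hinj : ∀ x ∈ s, ∀ y ∈ s, ep n x = ep n y → x = y := by
    intro x _ y _ hxy
    simp only [ep, Prod.mk.injEq] at hxy
    obtain ⟨e0, e3, e4, e1⟩ := hxy
    obtain ⟨_, _, _, _, _, _, hex⟩ := hfacts x
    obtain ⟨_, _, _, _, _, _, hey⟩ := hfacts y
    have e2 : x.1 2 = y.1 2 := by omega
    refine Subtype.ext (funext (fun i => ?_))
    fin_cases i
    · exact e0
    · exact e1
    · exact e2
    · exact e3
    · exact e4
  calc ∑ p ∈ s, ∏ i, ((p : Fin 5 → ℕ) i : ℝ) ^ (-5/7 : ℝ)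
      = ∑ p ∈ s, Gfun n (ep n p) := Finset.sum_congr rfl (fun p _ => hval p)
  _ = ∑ q ∈ s.image (ep n), Gfun n q := (Finset.sum_image hinj).symm
  _ ≤ ∑ q ∈ range (n+1) ×ˢ (range (n+1) ×ˢ (range (n+1) ×ˢ range (n+1))), Gfun n q := by
      refine Finset.sum_le_sum_of_subset_of_nonneg ?_ (fun q _ _ => Gfun_nonneg n q)
      intro q hq
      rw [Finset.mem_image] at hq
      obtain ⟨p, _, rfl⟩ := hq
      exact hmem p
  _ ≤ 392 * C8 := box_bound n
  _ ≤ 392 * C8 + 1 := by linarith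
end

section
/- There exists a constant C > 0 such that for every integer n ≥ 2, ∑ over 4-tuples of positive integers (x₁,x₂,x₃,x₄) with x₁+x₂+x₃+x₄ = n and x₄+x₃ = x₂+x₁ of ∏_{i=1}^{4} x_i^(-5/7) ≤ C·n^(-6/7). -/
/-!
Both pairs `(x₁, x₂)` and `(x₃, x₄)` lie on the antidiagonal `a + b = m` with `m = n / 2`,
so the sum is at most the square of `S(m) = ∑_{a + b = m} a^r b^r` with `r = -5/7`.
In each term of `S(m)` the larger of `a, b` is at least `m / 2`, whence
`S(m) ≤ 2 (m / 2)^r ∑_{k=1}^{m} k^r`, and the power sum is `O(m^(1+r))` by telescoping with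
Bernoulli's inequality. Hence `S(m) = O(m^(1+2r))` and the sum is `O(m^(2+4r)) = O(n^(-6/7))`.
-/

open Real Finset

lemma rpow_add_mul_add_one_rpow_le {r : ℝ} (hr1 : -1 ≤ r) (hr0 : r ≤ 0) {y : ℝ}
    (hy : 0 ≤ y) :
    y ^ (1 + r) + (1 + r) * (y + 1) ^ r ≤ (y + 1) ^ (1 + r) := by
  set x := y + 1
  have hx : 0 < x := by positivity
  have hy_eq : y = x * (1 + -1 / x) := by field_simp; ring
  have hx_inv : 1 / x ≤ 1 := div_le_one_of_le₀ (by linarith) hx.le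
  have bernoulli : (1 + -1 / x) ^ (1 + r) ≤ 1 + (1 + r) * (-1 / x) :=
    rpow_one_add_le_one_add_mul_self (by rw [neg_div]; linarith) (by linarith) (by linarith)
  have hx_div : x ^ (1 + r) / x = x ^ r := by rw [← rpow_sub_one hx.ne']; ring_nf
  calc y ^ (1 + r) + (1 + r) * x ^ r
      = x ^ (1 + r) * (1 + -1 / x) ^ (1 + r) + (1 + r) * x ^ r := by
        rw [hy_eq, mul_rpow hx.le (by rw [neg_div]; linarith)]
    _ ≤ x ^ (1 + r) * (1 + (1 + r) * (-1 / x)) + (1 + r) * x ^ r := by gcongr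
    _ = x ^ (1 + r) := by rw [← hx_div]; ring

lemma sum_range_add_one_rpow_le {r : ℝ} (hr1 : -1 < r) (hr0 : r ≤ 0) (m : ℕ) :
    ∑ k ∈ range m, ((k : ℝ) + 1) ^ r ≤ (m : ℝ) ^ (1 + r) / (1 + r) := by
  induction m with
  | zero => simp [zero_rpow (by linarith : 1 + r ≠ 0)]
  | succ m ih =>
    rw [sum_range_succ, Nat.cast_succ, le_div_iff₀ (by linarith)]
    have := rpow_add_mul_add_one_rpow_le hr1.le hr0 (Nat.cast_nonneg (α := ℝ) m)
    rw [le_div_iff₀ (by linarith)] at ih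
    nlinarith

lemma rpow_mul_rpow_le_of_add_eq {r : ℝ} (hr : r ≤ 0) {a b c : ℝ} (ha : 0 ≤ a)
    (hb : 0 ≤ b) (hc : 0 < c) (habc : a + b = c) :
    a ^ r * b ^ r ≤ (c / 2) ^ r * (a ^ r + b ^ r) := by
  have := rpow_nonneg ha r
  have := rpow_nonneg hb r
  rcases le_total a b with hab | hab
  · have : b ^ r ≤ (c / 2) ^ r := rpow_le_rpow_of_nonpos (by positivity) (by linarith) hr
    nlinarith
  · have : a ^ r ≤ (c / 2) ^ r := rpow_le_rpow_of_nonpos (by positivity) (by linarith) hr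
    nlinarith

lemma sum_antidiagonal_rpow_mul_rpow_le {r : ℝ} (hr1 : -1 < r) (hr0 : r < 0) {m : ℕ}
    (hm : 0 < m) :
    ∑ x ∈ antidiagonal m, (x.1 : ℝ) ^ r * (x.2 : ℝ) ^ r ≤
      2 ^ (1 - r) / (1 + r) * (m : ℝ) ^ (1 + 2 * r) := by
  have hm' : (0 : ℝ) < m := by exact_mod_cast hm
  -- `0 ^ r = 0` in Lean for `r ≠ 0`, so the term `k = 0` drops out
  have sum_fst :
      ∑ x ∈ antidiagonal m, (x.1 : ℝ) ^ r = ∑ k ∈ range m, ((k : ℝ) + 1) ^ r := by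
    rw [Nat.sum_antidiagonal_eq_sum_range_succ (fun a _ => (a : ℝ) ^ r), sum_range_succ']
    simp [zero_rpow hr0.ne]
  have sum_fst_eq_snd :
      ∑ x ∈ antidiagonal m, (x.1 : ℝ) ^ r = ∑ x ∈ antidiagonal m, (x.2 : ℝ) ^ r :=
    (Nat.sum_antidiagonal_swap (n := m) (f := fun x => (x.1 : ℝ) ^ r)).symm
  calc ∑ x ∈ antidiagonal m, (x.1 : ℝ) ^ r * (x.2 : ℝ) ^ r
      ≤ ∑ x ∈ antidiagonal m, ((m : ℝ) / 2) ^ r * ((x.1 : ℝ) ^ r + (x.2 : ℝ) ^ r) := by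
        refine sum_le_sum fun x hx =>
          rpow_mul_rpow_le_of_add_eq hr0.le (by positivity) (by positivity) hm' ?_
        exact_mod_cast mem_antidiagonal.mp hx
    _ = ((m : ℝ) / 2) ^ r * (2 * ∑ k ∈ range m, ((k : ℝ) + 1) ^ r) := by
        rw [← mul_sum, sum_add_distrib, ← sum_fst_eq_snd, sum_fst, two_mul]
    _ ≤ ((m : ℝ) / 2) ^ r * (2 * ((m : ℝ) ^ (1 + r) / (1 + r))) := by
        gcongr; exact sum_range_add_one_rpow_le hr1 hr0.le m
    _ = 2 ^ (1 - r) / (1 + r) * (m : ℝ) ^ (1 + 2 * r) := by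
        rw [div_rpow hm'.le zero_le_two, rpow_sub zero_lt_two, rpow_one,
          show 1 + 2 * r = r + (1 + r) by ring, rpow_add hm' r]
        ring

lemma tsum_prod_rpow_le_sq_sum_antidiagonal (r : ℝ) (m : ℕ) (P : (Fin 4 → ℕ) → Prop)
    (hP : ∀ p, P p → p 0 + p 1 = m ∧ p 2 + p 3 = m) :
    ∑' p : {p : Fin 4 → ℕ // P p}, ∏ i, ((p : Fin 4 → ℕ) i : ℝ) ^ r ≤
      (∑ x ∈ antidiagonal m, (x.1 : ℝ) ^ r * (x.2 : ℝ) ^ r) ^ 2 := by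
  set A := antidiagonal m ×ˢ antidiagonal m
  let F : (ℕ × ℕ) × (ℕ × ℕ) → ℝ := fun x =>
    (x.1.1 : ℝ) ^ r * (x.1.2 : ℝ) ^ r * ((x.2.1 : ℝ) ^ r * (x.2.2 : ℝ) ^ r)
  let pairs : {p : Fin 4 → ℕ // P p} → A := fun p =>
    ⟨((p.1 0, p.1 1), (p.1 2, p.1 3)), by
      simpa [A, mem_product, HasAntidiagonal.mem_antidiagonal] using hP p.1 p.2⟩
  have pairs_injective : Function.Injective pairs := by
    rintro ⟨p, _⟩ ⟨q, _⟩ h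
    simp only [pairs, Subtype.mk.injEq, Prod.mk.injEq] at h
    obtain ⟨⟨h0, h1⟩, h2, h3⟩ := h
    ext i
    fin_cases i <;> assumption
  calc ∑' p : {p : Fin 4 → ℕ // P p}, ∏ i, ((p : Fin 4 → ℕ) i : ℝ) ^ r
      = ∑' p, F (pairs p) := by simp [F, pairs, Fin.prod_univ_four, mul_assoc]
    _ ≤ ∑' x : A, F x :=
        tsum_comp_le_tsum_of_inj (f := fun x : A => F x) Summable.of_finite
          (fun _ => by positivity) pairs_injective
    _ = (∑ x ∈ antidiagonal m, (x.1 : ℝ) ^ r * (x.2 : ℝ) ^ r) ^ 2 := by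
        rw [Finset.tsum_subtype A F, sum_product, sq, sum_mul_sum]

theorem stmt13 :
    ∃ C : ℝ, 0 < C ∧ ∀ n : ℕ, 2 ≤ n →
      (∑' p : {p : Fin 4 → ℕ // (∀ i, 0 < p i) ∧ p 0 + p 1 + p 2 + p 3 = n ∧
          p 3 + p 2 = p 1 + p 0},
        ∏ i, ((p : Fin 4 → ℕ) i : ℝ) ^ (-5/7 : ℝ)) ≤ C * (n : ℝ) ^ (-6/7 : ℝ) := by
  set K : ℝ := 2 ^ (1 - -5/7 : ℝ) / (1 + -5/7)
  refine ⟨K ^ 2 / 3 ^ (-6/7 : ℝ), by positivity, fun n hn => ?_⟩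
  have hm : 0 < n / 2 := by omega
  have hn_le : (n : ℝ) / 3 ≤ (n / 2 : ℕ) := by
    rw [div_le_iff₀ three_pos]; exact_mod_cast (by omega : n ≤ n / 2 * 3)
  calc _ ≤ (∑ x ∈ antidiagonal (n / 2),
            (x.1 : ℝ) ^ (-5/7 : ℝ) * (x.2 : ℝ) ^ (-5/7 : ℝ)) ^ 2 :=
        tsum_prod_rpow_le_sq_sum_antidiagonal _ _ _ fun p hp => by omega
    _ ≤ (K * ((n / 2 : ℕ) : ℝ) ^ (1 + 2 * (-5/7) : ℝ)) ^ 2 := by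
        gcongr
        exact sum_antidiagonal_rpow_mul_rpow_le (by norm_num) (by norm_num) hm
    _ = K ^ 2 * ((n / 2 : ℕ) : ℝ) ^ (-6/7 : ℝ) := by
        rw [mul_pow, ← rpow_mul_natCast (Nat.cast_nonneg _)]; norm_num
    _ ≤ K ^ 2 * ((n : ℝ) / 3) ^ (-6/7 : ℝ) :=
        mul_le_mul_of_nonneg_left (rpow_le_rpow_of_nonpos (by positivity) hn_le (by norm_num))
          (by positivity)
    _ = K ^ 2 / 3 ^ (-6/7 : ℝ) * (n : ℝ) ^ (-6/7 : ℝ) := by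
        rw [div_rpow (Nat.cast_nonneg _) zero_le_three]; ring
end

section
/- There exists a constant C > 0 such that for every integer n ≥ 3, ∑ over pairs of positive integers (x₁, x₂) with x₁ + 2x₂ ≤ n - 1 of x₁^(-5/7)·x₂^(-5/7)·(n - x₁ - 2x₂)^(-5/7) ≤ C·n^(-1/7). -/
/-!
Write `c = n - x₁ - 2x₂`, so that `x₁ + 2x₂ + c = n` and one of `x₁, x₂, c` is at least `n/6`.
Bounding that factor by `(n/6)^(-5/7)` leaves a sum of products of two of the three factors.
Any two of `x₁, x₂, c` determine the third, so each such sum is at most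
`(∑_{k ≤ n} k^(-5/7))² ≤ ((7/2) n^(2/7))²`. Altogether the sum is `O(n^(-5/7) n^(4/7))`.
-/

open Finset

theorem add_one_mul_rpow_le_rpow_sub_rpow {r x : ℝ} (hr₁ : -1 ≤ r) (hr₀ : r ≤ 0)
    (hx : 0 ≤ x) :
    (r + 1) * (x + 1) ^ r ≤ (x + 1) ^ (r + 1) - x ^ (r + 1) := by
  have hy : 0 < x + 1 := by linarith
  have hinv : (x + 1)⁻¹ ≤ 1 := inv_le_one_of_one_le₀ (by linarith)
  have hbernoulli := rpow_one_add_le_one_add_mul_self (s := -(x + 1)⁻¹) (p := r + 1)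
    (by linarith) (by linarith) (by linarith)
  have hsplit : x ^ (r + 1) = (x + 1) ^ (r + 1) * (1 + -(x + 1)⁻¹) ^ (r + 1) := by
    rw [← Real.mul_rpow hy.le (by linarith)]
    congr 1
    field_simp
    ring
  have hpow : (x + 1) ^ r = (x + 1) ^ (r + 1) * (x + 1)⁻¹ := by
    rw [Real.rpow_add hy, Real.rpow_one, mul_inv_cancel_right₀ hy.ne']
  rw [hsplit, hpow]
  nlinarith [Real.rpow_nonneg hy.le (r + 1)]

theorem sum_Icc_rpow_le {r : ℝ} (hr₁ : -1 < r) (hr₀ : r ≤ 0) (n : ℕ) :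
    ∑ k ∈ Icc 1 n, (k : ℝ) ^ r ≤ (n : ℝ) ^ (r + 1) / (r + 1) := by
  induction n with
  | zero =>
    simp only [Nat.cast_zero, Icc_eq_empty_of_lt Nat.zero_lt_one, sum_empty]
    exact div_nonneg (Real.rpow_nonneg le_rfl _) (by linarith)
  | succ n ih =>
    rw [sum_Icc_succ_top (by omega), Nat.cast_succ]
    have hstep := add_one_mul_rpow_le_rpow_sub_rpow hr₁.le hr₀ n.cast_nonneg
    rw [le_div_iff₀ (by linarith)] at ih ⊢
    linarith

theorem sum_mul_le_sq_of_injOn {ι α R : Type*} [CommSemiring R] [PartialOrder R] [IsOrderedRing R]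
    [DecidableEq α] {s : Finset ι} {t : Finset α} {f : α → R} {e : ι → α × α}
    (hf : ∀ k ∈ t, 0 ≤ f k) (he : Set.InjOn e s) (hst : ∀ i ∈ s, e i ∈ t ×ˢ t) :
    ∑ i ∈ s, f (e i).1 * f (e i).2 ≤ (∑ k ∈ t, f k) ^ 2 := by
  calc ∑ i ∈ s, f (e i).1 * f (e i).2 = ∑ q ∈ s.image e, f q.1 * f q.2 :=
      (sum_image (f := fun q => f q.1 * f q.2) he).symm
    _ ≤ ∑ q ∈ t ×ˢ t, f q.1 * f q.2 :=
      sum_le_sum_of_subset_of_nonneg (image_subset_iff.mpr hst) fun q hq _ =>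
        mul_nonneg (hf _ (mem_product.mp hq).1) (hf _ (mem_product.mp hq).2)
    _ = (∑ k ∈ t, f k) ^ 2 := by rw [sq, sum_mul_sum, sum_product]

theorem mul_mul_le_of_le_or_le_or_le {R : Type*} [CommSemiring R] [PartialOrder R]
    [IsOrderedRing R] {u v w d : R} (hu : 0 ≤ u) (hv : 0 ≤ v) (hw : 0 ≤ w)
    (h : u ≤ d ∨ v ≤ d ∨ w ≤ d) : u * v * w ≤ d * (v * w + u * w + u * v) := by
  have huv := mul_nonneg hu hv
  have huw := mul_nonneg hu hw
  have hvw := mul_nonneg hv hw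
  rcases h with h | h | h
  · have hd := hu.trans h
    calc u * v * w = u * (v * w) := mul_assoc u v w
      _ ≤ d * (v * w) := by gcongr
      _ ≤ d * (v * w + u * w + u * v) := by
        gcongr; exact le_add_of_le_of_nonneg (le_add_of_nonneg_right huw) huv
  · have hd := hv.trans h
    calc u * v * w = v * (u * w) := by ring
      _ ≤ d * (u * w) := by gcongr
      _ ≤ d * (v * w + u * w + u * v) := by
        gcongr; exact le_add_of_le_of_nonneg (le_add_of_nonneg_left hvw) huv
  · have hd := hw.trans h
    calc u * v * w = w * (u * v) := by ring
      _ ≤ d * (u * v) := by gcongr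
      _ ≤ d * (v * w + u * w + u * v) := by
        gcongr; exact le_add_of_nonneg_left (add_nonneg hvw huw)

theorem sum_mul_mul_le_of_injOn {ι α R : Type*} [CommSemiring R] [PartialOrder R]
    [IsOrderedRing R] [DecidableEq α] {s : Finset ι} {t : Finset α} {f : α → R}
    {a b c : ι → α} {d : R} (hf : ∀ k ∈ t, 0 ≤ f k) (hd : 0 ≤ d)
    (ha : ∀ i ∈ s, a i ∈ t) (hb : ∀ i ∈ s, b i ∈ t) (hc : ∀ i ∈ s, c i ∈ t)
    (hab : Set.InjOn (fun i => (a i, b i)) s) (hac : Set.InjOn (fun i => (a i, c i)) s)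
    (hbc : Set.InjOn (fun i => (b i, c i)) s)
    (hlarge : ∀ i ∈ s, f (a i) ≤ d ∨ f (b i) ≤ d ∨ f (c i) ≤ d) :
    ∑ i ∈ s, f (a i) * f (b i) * f (c i) ≤ 3 * d * (∑ k ∈ t, f k) ^ 2 := by
  calc ∑ i ∈ s, f (a i) * f (b i) * f (c i)
      ≤ ∑ i ∈ s, d * (f (b i) * f (c i) + f (a i) * f (c i) + f (a i) * f (b i)) :=
        sum_le_sum fun i hi => mul_mul_le_of_le_or_le_or_le (hf _ (ha i hi)) (hf _ (hb i hi))
          (hf _ (hc i hi)) (hlarge i hi)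
    _ = d * (∑ i ∈ s, f (b i) * f (c i) + ∑ i ∈ s, f (a i) * f (c i)
          + ∑ i ∈ s, f (a i) * f (b i)) := by
        rw [← mul_sum, sum_add_distrib, sum_add_distrib]
    _ ≤ d * ((∑ k ∈ t, f k) ^ 2 + (∑ k ∈ t, f k) ^ 2 + (∑ k ∈ t, f k) ^ 2) := by
        gcongr d * (?_ + ?_ + ?_)
        · exact sum_mul_le_sq_of_injOn hf hbc fun i hi => mem_product.mpr ⟨hb i hi, hc i hi⟩
        · exact sum_mul_le_sq_of_injOn hf hac fun i hi => mem_product.mpr ⟨ha i hi, hc i hi⟩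
        · exact sum_mul_le_sq_of_injOn hf hab fun i hi => mem_product.mpr ⟨ha i hi, hb i hi⟩
    _ = 3 * d * (∑ k ∈ t, f k) ^ 2 := by ring

theorem tsum_subtype_eq_sum_of_iff {α β : Type*} [AddCommMonoid α] [TopologicalSpace α]
    {P : β → Prop} (s : Finset β) (hs : ∀ x, P x ↔ x ∈ s) (f : β → α) :
    ∑' x : {x // P x}, f x = ∑ x ∈ s, f x := by
  obtain rfl : P = (· ∈ s) := funext fun x => propext (hs x)
  exact tsum_subtype s f

def triangleIndex (n : ℕ) : Finset (ℕ × ℕ) :=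
  (Icc 1 n ×ˢ Icc 1 n).filter fun p => p.1 + 2 * p.2 < n

theorem mem_triangleIndex {n : ℕ} {p : ℕ × ℕ} :
    p ∈ triangleIndex n ↔ 0 < p.1 ∧ 0 < p.2 ∧ p.1 + 2 * p.2 ≤ n - 1 := by
  simp only [triangleIndex, mem_filter, mem_product, mem_Icc]
  omega

theorem sum_triangleIndex_rpow_le {r : ℝ} (hr : r ≤ 0) {n : ℕ} (hn : 0 < n) :
    ∑ p ∈ triangleIndex n,
        (p.1 : ℝ) ^ r * (p.2 : ℝ) ^ r * ((n - p.1 - 2 * p.2 : ℕ) : ℝ) ^ r ≤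
      3 * ((n : ℝ) / 6) ^ r * (∑ k ∈ Icc 1 n, (k : ℝ) ^ r) ^ 2 := by
  have hlarge (k : ℕ) (hk : n ≤ 6 * k) : (k : ℝ) ^ r ≤ ((n : ℝ) / 6) ^ r := by
    refine Real.rpow_le_rpow_of_nonpos (by positivity) ?_ hr
    rw [div_le_iff₀ (by norm_num)]
    exact_mod_cast (by omega : n ≤ k * 6)
  have hpigeon (p : ℕ × ℕ) (hp : p ∈ triangleIndex n) :
      n ≤ 6 * p.1 ∨ n ≤ 6 * p.2 ∨ n ≤ 6 * (n - p.1 - 2 * p.2) := by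
    rw [mem_triangleIndex] at hp
    omega
  refine sum_mul_mul_le_of_injOn (f := fun k : ℕ => (k : ℝ) ^ r) (d := ((n : ℝ) / 6) ^ r)
    (a := Prod.fst) (b := Prod.snd) (c := fun p => n - p.1 - 2 * p.2)
    (fun k _ => by positivity) (by positivity) ?_ ?_ ?_ ?_ ?_ ?_
    fun p hp => (hpigeon p hp).imp (hlarge _) (Or.imp (hlarge _) (hlarge _))
  all_goals
    simp only [Set.InjOn, mem_coe, mem_triangleIndex, mem_Icc, Prod.ext_iff]
    intros
    omega

theorem stmt14 :
    ∃ C : ℝ, 0 < C ∧ ∀ n : ℕ, 3 ≤ n →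
      (∑' p : {p : ℕ × ℕ // 0 < p.1 ∧ 0 < p.2 ∧ p.1 + 2 * p.2 ≤ n - 1},
        ((p : ℕ × ℕ).1 : ℝ) ^ (-5/7 : ℝ) * ((p : ℕ × ℕ).2 : ℝ) ^ (-5/7 : ℝ) *
        ((n : ℝ) - (p : ℕ × ℕ).1 - 2 * (p : ℕ × ℕ).2) ^ (-5/7 : ℝ)) ≤
        C * (n : ℝ) ^ (-1/7 : ℝ) := by
  refine ⟨3 * 6 ^ (5/7 : ℝ) * (7/2) ^ 2, by positivity, fun n hn => ?_⟩
  have hn0 : (0 : ℝ) < n := by exact_mod_cast (by omega : 0 < n)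
  calc _ = ∑ p ∈ triangleIndex n, (p.1 : ℝ) ^ (-5/7 : ℝ) * (p.2 : ℝ) ^ (-5/7 : ℝ) *
          ((n : ℝ) - p.1 - 2 * p.2) ^ (-5/7 : ℝ) :=
        tsum_subtype_eq_sum_of_iff _ (fun _ => mem_triangleIndex.symm) _
    _ = ∑ p ∈ triangleIndex n, (p.1 : ℝ) ^ (-5/7 : ℝ) * (p.2 : ℝ) ^ (-5/7 : ℝ) *
          ((n - p.1 - 2 * p.2 : ℕ) : ℝ) ^ (-5/7 : ℝ) := by
        refine sum_congr rfl fun p hp => ?_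
        rw [mem_triangleIndex] at hp
        rw [Nat.cast_sub (by omega), Nat.cast_sub (by omega), Nat.cast_mul, Nat.cast_ofNat]
    _ ≤ 3 * ((n : ℝ) / 6) ^ (-5/7 : ℝ) * (∑ k ∈ Icc 1 n, (k : ℝ) ^ (-5/7 : ℝ)) ^ 2 :=
        sum_triangleIndex_rpow_le (by norm_num) (by omega)
    _ ≤ 3 * ((n : ℝ) / 6) ^ (-5/7 : ℝ) * ((n : ℝ) ^ (-5/7 + 1 : ℝ) / (-5/7 + 1)) ^ 2 := by
        gcongr
        exact sum_Icc_rpow_le (by norm_num) (by norm_num) n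
    _ = 3 * 6 ^ (5/7 : ℝ) * (7/2) ^ 2 * (n : ℝ) ^ (-1/7 : ℝ) := by
        have hexp : (n : ℝ) ^ (-5/7 : ℝ) * ((n : ℝ) ^ (-5/7 + 1 : ℝ)) ^ 2 = n ^ (-1/7 : ℝ) := by
          rw [← Real.rpow_natCast, ← Real.rpow_mul hn0.le, ← Real.rpow_add hn0]
          norm_num
        rw [Real.div_rpow hn0.le (by norm_num), div_pow, ← hexp]
        field_simp
        rw [Real.rpow_neg (by norm_num)]
        field_simp
        norm_num
end
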